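/- arXiv:1206.3521 — 12 statements merged into one kernel-verified Lean document; each statement's English description precedes it below -/
import Mathlib

section
/- Let X be a spectral space, Y ⊆ X, and U an ultrafilter on Y. Let K̄_{Y,U} := {X \ U | U open quasi-compact in X, Y \ U ∈ 𝒰} and K_{Y,U} := K̄_{Y,U} ∪ {U open quasi-compact | U ∩ Y ∈ 𝒰}. Then ⋂ K_{Y,U} is a singleton. -/
/-- A spectral space (Hochster's characterization): a quasi-compact T₀ space with a basis
of quasi-compact open sets closed under finite intersections, in which every nonempty
irreducible closed set has a generic point. -/
def IsSpectralSpace (X : Type*) [TopologicalSpace X] : Prop :=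
  CompactSpace X ∧ T0Space X ∧
    TopologicalSpace.IsTopologicalBasis {U : Set X | IsOpen U ∧ IsCompact U} ∧
    (∀ U V : Set X, IsOpen U → IsCompact U → IsOpen V → IsCompact V → IsCompact (U ∩ V)) ∧
    (∀ C : Set X, IsClosed C → IsIrreducible C → ∃ x : X, C = closure {x})

/-- The constructible (patch) topology on a topological space `X`: the topology generated
by the quasi-compact open sets together with their complements. -/
def constructibleTop (X : Type*) [TopologicalSpace X] : TopologicalSpace X :=
  TopologicalSpace.generateFrom
    ({U : Set X | IsOpen U ∧ IsCompact U} ∪ (compl '' {U : Set X | IsOpen U ∧ IsCompact U}))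

/-- The family `K̄_{Y,𝒰}`: complements of quasi-compact open sets `U` with `Y \ U ∈ 𝒰`. -/
def barFam {X : Type*} [TopologicalSpace X] (Y : Set X) (𝒰 : Ultrafilter Y) :
    Set (Set X) :=
  {S | ∃ U : Set X, IsOpen U ∧ IsCompact U ∧ {y : Y | (y : X) ∉ U} ∈ 𝒰 ∧ S = Uᶜ}

/-- The family `K_{Y,𝒰}`: the sets in `K̄_{Y,𝒰}` together with the quasi-compact open sets
`U` with `U ∩ Y ∈ 𝒰`. -/
def limitFam {X : Type*} [TopologicalSpace X] (Y : Set X) (𝒰 : Ultrafilter Y) :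
    Set (Set X) :=
  barFam Y 𝒰 ∪ {U : Set X | IsOpen U ∧ IsCompact U ∧ {y : Y | (y : X) ∈ U} ∈ 𝒰}

/-!
Pushed forward along `Y ↪ X`, the ultrafilter `𝒰` becomes an ultrafilter on `X`, and
`K_{Y,𝒰}` is the set of its members among the quasi-compact opens and their complements, the
subbasic clopen sets of the constructible topology. That topology is compact on a spectral space,
so these sets, which have the finite intersection property, meet. A common point `x` satisfies
`x ∈ U ↔ U ∈ 𝒰` for every quasi-compact open `U`, so two common points are inseparable, hence
equal because `X` is T₀.
-/

section

variable {X : Type*} [TopologicalSpace X]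

theorem IsSpectralSpace.spectralSpace (hX : IsSpectralSpace X) : SpectralSpace X :=
  let ⟨hcomp, ht0, hbasis, hinter, hgen⟩ := hX
  { toT0Space := ht0
    toCompactSpace := hcomp
    sober := fun hirr hclosed => (hgen _ hclosed hirr).imp fun _ h => h.symm
    inter_isCompact := hinter
    isTopologicalBasis := hbasis }

theorem compactSpace_constructibleTopology [CompactSpace X] [QuasiSober X]
    [PrespectralSpace X] [QuasiSeparatedSpace X] : @CompactSpace X (constructibleTopology X) :=
  @Function.Surjective.compactSpace _ _ _ (constructibleTopology X) _
    (WithTopology.continuous_ofTopology _) _ (WithTopology.ofTopology_surjective _)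

theorem Filter.nonempty_sInter_constructibleTopologySubbasis [CompactSpace X] [QuasiSober X]
    [PrespectralSpace X] [QuasiSeparatedSpace X] (f : Filter X) [f.NeBot] :
    (⋂₀ {s ∈ constructibleTopologySubbasis X | s ∈ f}).Nonempty := by
  refine @CompactSpace.nonempty_sInter X (constructibleTopology X)
    compactSpace_constructibleTopology _ (fun s hs => ?_) fun t ht htf =>
      Filter.nonempty_of_mem ((Filter.sInter_mem htf).2 fun s hs => (ht hs).2)
  exact (@isOpen_compl_iff _ _ (constructibleTopology X)).1 <|
    TopologicalSpace.isOpen_generateFrom_of_mem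
      (compl_mem_constructibleTopologySubbasis_iff.2 hs.1)

namespace Ultrafilter

theorem mem_iff_of_mem_sInter_constructibleTopologySubbasis (𝒱 : Ultrafilter X) {x : X}
    (hx : x ∈ ⋂₀ {s ∈ constructibleTopologySubbasis X | s ∈ 𝒱}) {U : Set X}
    (hUo : IsOpen U) (hUc : IsCompact U) : x ∈ U ↔ U ∈ 𝒱 := by
  refine ⟨fun hxU => ?_, fun hU => hx U ⟨.inl ⟨hUo, hUc⟩, hU⟩⟩
  by_contra hU
  have hUcompl : Uᶜ ∈ constructibleTopologySubbasis X :=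
    .inr ⟨hUo.isClosed_compl, by rwa [compl_compl]⟩
  exact hx Uᶜ ⟨hUcompl, compl_mem_iff_notMem.2 hU⟩ hxU

theorem subsingleton_sInter_constructibleTopologySubbasis [T0Space X] [PrespectralSpace X]
    (𝒱 : Ultrafilter X) :
    (⋂₀ {s ∈ constructibleTopologySubbasis X | s ∈ 𝒱}).Subsingleton := fun _ ha _ hb =>
  (PrespectralSpace.isTopologicalBasis.inseparable_iff.2 fun _ hU =>
    (𝒱.mem_iff_of_mem_sInter_constructibleTopologySubbasis ha hU.1 hU.2).trans
      (𝒱.mem_iff_of_mem_sInter_constructibleTopologySubbasis hb hU.1 hU.2).symm).eq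

end Ultrafilter

theorem limitFam_eq (Y : Set X) (𝒰 : Ultrafilter Y) :
    limitFam Y 𝒰 = {s ∈ constructibleTopologySubbasis X | s ∈ 𝒰.map (↑)} := by
  ext s
  simp only [limitFam, barFam, constructibleTopologySubbasis, Ultrafilter.mem_map]
  constructor
  · rintro (⟨U, hUo, hUc, hU, rfl⟩ | ⟨hso, hsc, hs⟩)
    · exact ⟨.inr ⟨hUo.isClosed_compl, by rwa [compl_compl]⟩, hU⟩
    · exact ⟨.inl ⟨hso, hsc⟩, hs⟩
  · rintro ⟨⟨hso, hsc⟩ | ⟨hsc, hsk⟩, hs⟩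
    · exact .inr ⟨hso, hsc, hs⟩
    · exact .inl ⟨sᶜ, hsc.isOpen_compl, hsk, by simp only [Set.mem_compl_iff, not_not]; exact hs,
        (compl_compl s).symm⟩

end

/-- In a spectral space `X`, for any `Y ⊆ X` and any ultrafilter `𝒰` on `Y`,
the intersection `⋂ K_{Y,𝒰}` is a singleton. -/
theorem limitFam_sInter_singleton {X : Type*} [TopologicalSpace X]
    (hX : IsSpectralSpace X) (Y : Set X) (𝒰 : Ultrafilter Y) :
    ∃ x : X, ⋂₀ limitFam Y 𝒰 = {x} := by
  have := hX.spectralSpace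
  rw [limitFam_eq, Set.exists_eq_singleton_iff_nonempty_subsingleton]
  exact ⟨Filter.nonempty_sInter_constructibleTopologySubbasis _,
    Ultrafilter.subsingleton_sInter_constructibleTopologySubbasis _⟩
end

section
/- Let X be a spectral space, Y ⊆ X, and 𝒰 an ultrafilter on Y. Then ⋂{X \ U | U open quasi-compact, Y \ U ∈ 𝒰} is an irreducible closed subset of X whose generic point is the unique point of ⋂ K_{Y,𝒰} (the ultrafilter limit point of Y with respect to 𝒰). -/
section UltrafilterLimit

variable {X : Type*} [TopologicalSpace X] {Y : Set X} {𝒰 : Ultrafilter Y}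

lemma isClosed_of_mem_barFam {S : Set X} (hS : S ∈ barFam Y 𝒰) : IsClosed S := by
  obtain ⟨U, hUo, -, -, rfl⟩ := hS
  exact hUo.isClosed_compl

lemma preimage_coe_mem_of_mem_barFam {S : Set X} (hS : S ∈ barFam Y 𝒰) :
    ((↑) : Y → X) ⁻¹' S ∈ 𝒰 := by
  obtain ⟨U, -, -, hU, rfl⟩ := hS
  exact hU

lemma compl_mem_barFam {U : Set X} (hUo : IsOpen U) (hUc : IsCompact U)
    (hU : ((↑) : Y → X) ⁻¹' U ∉ 𝒰) : Uᶜ ∈ barFam Y 𝒰 :=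
  ⟨U, hUo, hUc, Ultrafilter.compl_mem_iff_notMem.2 hU, rfl⟩

variable (Y 𝒰) in
lemma isClosed_sInter_barFam : IsClosed (⋂₀ barFam Y 𝒰) :=
  isClosed_sInter fun _ ↦ isClosed_of_mem_barFam

lemma sInter_barFam_inter_nonempty {W : Set X} (hW : IsCompact W)
    (hWU : ((↑) : Y → X) ⁻¹' W ∈ 𝒰) : (⋂₀ barFam Y 𝒰 ∩ W).Nonempty := by
  rw [Set.sInter_eq_iInter, Set.inter_comm]
  refine hW.inter_iInter_nonempty _ (fun S ↦ isClosed_of_mem_barFam S.2) fun u ↦ ?_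
  have hbig : ((↑) : Y → X) ⁻¹' (W ∩ ⋂ S ∈ u, (S : Set X)) ∈ 𝒰 := by
    simp only [Set.preimage_inter, Set.preimage_iInter₂]
    exact Filter.inter_mem hWU
      ((Filter.biInter_finset_mem u).2 fun S _ ↦ preimage_coe_mem_of_mem_barFam S.2)
  obtain ⟨y, hy⟩ := Ultrafilter.nonempty_of_mem hbig
  exact ⟨y, hy⟩

lemma sInter_barFam_inter_nonempty_iff {W : Set X} (hWo : IsOpen W) (hWc : IsCompact W) :
    (⋂₀ barFam Y 𝒰 ∩ W).Nonempty ↔ ((↑) : Y → X) ⁻¹' W ∈ 𝒰 := by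
  refine ⟨fun ⟨z, hzZ, hzW⟩ ↦ ?_, sInter_barFam_inter_nonempty hWc⟩
  by_contra hW
  exact hzZ _ (compl_mem_barFam hWo hWc hW) hzW

lemma sInter_barFam_nonempty [CompactSpace X] : (⋂₀ barFam Y 𝒰).Nonempty := by
  simpa using sInter_barFam_inter_nonempty (𝒰 := 𝒰) isCompact_univ Filter.univ_mem

lemma isPreirreducible_sInter_barFam
    (hbasis : TopologicalSpace.IsTopologicalBasis {U : Set X | IsOpen U ∧ IsCompact U})
    (hinter : ∀ U V : Set X, IsOpen U → IsCompact U → IsOpen V → IsCompact V →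
      IsCompact (U ∩ V)) :
    IsPreirreducible (⋂₀ barFam Y 𝒰) := by
  rintro V₁ V₂ hV₁ hV₂ ⟨z₁, hz₁Z, hz₁V⟩ ⟨z₂, hz₂Z, hz₂V⟩
  obtain ⟨W₁, ⟨hW₁o, hW₁c⟩, hz₁W, hW₁V⟩ := hbasis.exists_subset_of_mem_open hz₁V hV₁
  obtain ⟨W₂, ⟨hW₂o, hW₂c⟩, hz₂W, hW₂V⟩ := hbasis.exists_subset_of_mem_open hz₂V hV₂
  have hW₁U := (sInter_barFam_inter_nonempty_iff hW₁o hW₁c).1 ⟨z₁, hz₁Z, hz₁W⟩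
  have hW₂U := (sInter_barFam_inter_nonempty_iff hW₂o hW₂c).1 ⟨z₂, hz₂Z, hz₂W⟩
  obtain ⟨z, hzZ, hzW₁, hzW₂⟩ := sInter_barFam_inter_nonempty
    (hinter W₁ W₂ hW₁o hW₁c hW₂o hW₂c) (Filter.inter_mem hW₁U hW₂U)
  exact ⟨z, hzZ, hW₁V hzW₁, hW₂V hzW₂⟩

lemma mem_sInter_limitFam_iff {x : X} :
    x ∈ ⋂₀ limitFam Y 𝒰 ↔
      ∀ U : Set X, IsOpen U → IsCompact U → (x ∈ U ↔ ((↑) : Y → X) ⁻¹' U ∈ 𝒰) := by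
  constructor
  · intro hx U hUo hUc
    refine ⟨fun hxU ↦ ?_, fun hU ↦ hx U (Or.inr ⟨hUo, hUc, hU⟩)⟩
    by_contra hU
    exact hx _ (Or.inl (compl_mem_barFam hUo hUc hU)) hxU
  · rintro hx S (⟨U, hUo, hUc, hU, rfl⟩ | ⟨hSo, hSc, hS⟩)
    · exact fun hxU ↦ Ultrafilter.compl_mem_iff_notMem.1 hU ((hx U hUo hUc).1 hxU)
    · exact (hx S hSo hSc).2 hS

lemma sInter_limitFam_subsingleton [T0Space X]
    (hbasis : TopologicalSpace.IsTopologicalBasis {U : Set X | IsOpen U ∧ IsCompact U}) :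
    (⋂₀ limitFam Y 𝒰).Subsingleton := by
  intro x hx x' hx'
  rw [mem_sInter_limitFam_iff] at hx hx'
  exact hbasis.eq_iff.2 fun U ⟨hUo, hUc⟩ ↦ (hx U hUo hUc).trans (hx' U hUo hUc).symm

lemma IsGenericPoint.mem_sInter_limitFam {x : X} (hx : IsGenericPoint x (⋂₀ barFam Y 𝒰)) :
    x ∈ ⋂₀ limitFam Y 𝒰 :=
  mem_sInter_limitFam_iff.2 fun _ hUo hUc ↦
    (hx.mem_open_set_iff hUo).trans (sInter_barFam_inter_nonempty_iff hUo hUc)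

end UltrafilterLimit

/-- In a spectral space `X`, for `Y ⊆ X` and an ultrafilter `𝒰` on `Y`, the set
`⋂ K̄_{Y,𝒰}` is an irreducible closed subset of `X` whose generic point is the unique
point of `⋂ K_{Y,𝒰}` (the ultrafilter limit point of `Y` with respect to `𝒰`). -/
theorem barFam_sInter_irreducible_closed {X : Type*} [TopologicalSpace X]
    (hX : IsSpectralSpace X) (Y : Set X) (𝒰 : Ultrafilter Y) :
    IsClosed (⋂₀ barFam Y 𝒰) ∧ IsIrreducible (⋂₀ barFam Y 𝒰) ∧
      ∃ x : X, ⋂₀ limitFam Y 𝒰 = {x} ∧ ⋂₀ barFam Y 𝒰 = closure {x} := by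
  obtain ⟨_, _, hbasis, hinter, hgen⟩ := hX
  have hirr : IsIrreducible (⋂₀ barFam Y 𝒰) :=
    ⟨sInter_barFam_nonempty, isPreirreducible_sInter_barFam hbasis hinter⟩
  obtain ⟨x, hx⟩ := hgen _ (isClosed_sInter_barFam Y 𝒰) hirr
  have hxlim : x ∈ ⋂₀ limitFam Y 𝒰 := IsGenericPoint.mem_sInter_limitFam hx.symm
  exact ⟨isClosed_sInter_barFam Y 𝒰, hirr, x,
    (sInter_limitFam_subsingleton hbasis).eq_singleton_of_mem hxlim, hx⟩
end

section
/- Let R be a commutative ring, Y a subset of Spec(R), and 𝒰 an ultrafilter on Y. Then P_{Y,𝒰} := {a ∈ R | V(a) ∩ Y ∈ 𝒰} is a prime ideal of R, where V(a) = {P ∈ Spec(R) | a ∈ P}. -/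
/-! `P_{Y,𝒰}` is the `𝒰`-limit of the primes in `Y`: `a ∈ P_{Y,𝒰}` iff `a ∈ y` for `𝒰`-almost
every `y`. It is closed under addition because `𝒰` is closed under finite intersections, and it
is prime because an ultrafilter containing `{y | a ∈ y} ∪ {y | b ∈ y}` contains one of the two. -/

namespace Ideal

variable {ι R : Type*} [Semiring R]

def filterLim (l : Filter ι) (I : ι → Ideal R) : Ideal R where
  carrier := {a | ∀ᶠ i in l, a ∈ I i}
  zero_mem' := Filter.Eventually.of_forall fun i => (I i).zero_mem
  add_mem' ha hb := ha.mp <| hb.mono fun _ hb ha => add_mem ha hb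
  smul_mem' c _ ha := ha.mono fun i ha => (I i).mul_mem_left c ha

@[simp]
theorem mem_filterLim {l : Filter ι} {I : ι → Ideal R} {a : R} :
    a ∈ filterLim l I ↔ ∀ᶠ i in l, a ∈ I i :=
  Iff.rfl

theorem isPrime_filterLim (𝒰 : Ultrafilter ι) {I : ι → Ideal R} (hI : ∀ i, (I i).IsPrime) :
    (filterLim (𝒰 : Filter ι) I).IsPrime where
  ne_top' htop := by
    have hone : ∀ᶠ i in (𝒰 : Filter ι), (1 : R) ∈ I i :=
      mem_filterLim.mp (htop ▸ Submodule.mem_top)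
    obtain ⟨i, hi⟩ := hone.exists
    exact (hI i).ne_top ((eq_top_iff_one _).mpr hi)
  mem_or_mem' hab :=
    Ultrafilter.eventually_or.mp (hab.mono fun i hi => (hI i).mem_or_mem hi)

end Ideal

/-- Let `R` be a commutative ring, `Y ⊆ Spec(R)` and `𝒰` an ultrafilter on `Y`. Then
`P_{Y,𝒰} := {a ∈ R | V(a) ∩ Y ∈ 𝒰}` is a prime ideal of `R`, where
`V(a)` is the set of primes containing `a`. -/
theorem ultrafilter_limit_prime {R : Type*} [CommRing R]
    (Y : Set (PrimeSpectrum R)) (𝒰 : Ultrafilter Y) :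
    ∃ P : Ideal R, P.IsPrime ∧
      (P : Set R) = {a : R | {y : Y | a ∈ (y : PrimeSpectrum R).asIdeal} ∈ 𝒰} :=
  ⟨Ideal.filterLim (𝒰 : Filter Y) fun y => (y : PrimeSpectrum R).asIdeal,
    Ideal.isPrime_filterLim 𝒰 fun y => (y : PrimeSpectrum R).isPrime, rfl⟩
end

section
/- Let R be a commutative ring, Y ⊆ Spec(R), and 𝒰 an ultrafilter on Y. A prime ideal P of R lies in the constructible (patch) closure of Y if and only if P = P_{Y,𝒰} := {a ∈ R | V(a) ∩ Y ∈ 𝒰} for some ultrafilter 𝒰 on Y. -/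
/-!
An ultrafilter on `Spec R` converges to `P` in the patch topology iff it contains exactly the
quasi-compact opens that contain `P`. The basic opens `D(a)` form a basis of quasi-compact
opens, every quasi-compact open is a finite union of them, and an ultrafilter contains a finite
union iff it contains one of its members; so convergence to `P` says `V(a) ∈ 𝒰 ↔ a ∈ P` for
every `a`. Ultrafilters on `Spec R` containing `Y` are the pushforwards of ultrafilters on `Y`.
-/

open Filter Set TopologicalSpace

theorem Ultrafilter.le_nhds_constructibleTop_iff {X : Type*} [TopologicalSpace X]
    (u : Ultrafilter X) (x : X) :
    ↑u ≤ @nhds X (constructibleTop X) x ↔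
      ∀ U : Set X, IsOpen U → IsCompact U → (U ∈ u ↔ x ∈ U) := by
  rw [← tendsto_id', constructibleTop, tendsto_nhds_generateFrom_iff]
  simp only [mem_union, mem_image, mem_ofPred_eq, preimage_id]
  refine ⟨fun h U hUo hUc => ⟨fun hU => ?_, fun hx => h U (.inl ⟨hUo, hUc⟩) hx⟩, ?_⟩
  · by_contra hx
    exact Ultrafilter.compl_notMem_iff.mpr hU (h Uᶜ (.inr ⟨U, ⟨hUo, hUc⟩, rfl⟩) hx)
  · rintro h s (⟨hso, hsc⟩ | ⟨U, ⟨hUo, hUc⟩, rfl⟩) hx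
    · exact (h s hso hsc).mpr hx
    · exact Ultrafilter.compl_mem_iff_notMem.mpr fun hU => hx ((h U hUo hUc).mp hU)

theorem Ultrafilter.le_nhds_constructibleTop_iff_of_isTopologicalBasis {X ι : Type*}
    [TopologicalSpace X] {b : ι → Set X} (hb : IsTopologicalBasis (range b))
    (hb' : ∀ i, IsCompact (b i)) (u : Ultrafilter X) (x : X) :
    ↑u ≤ @nhds X (constructibleTop X) x ↔ ∀ i, (b i ∈ u ↔ x ∈ b i) := by
  rw [u.le_nhds_constructibleTop_iff]
  refine ⟨fun h i => h _ (hb.isOpen (mem_range_self i)) (hb' i), fun h U hUo hUc => ?_⟩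
  obtain ⟨s, hs, rfl⟩ :=
    (isCompact_open_iff_eq_finite_iUnion_of_isTopologicalBasis b hb hb' U).mp ⟨hUc, hUo⟩
  simp only [u.finite_biUnion_mem_iff hs, mem_iUnion₂, exists_prop, h]

theorem PrimeSpectrum.ultrafilter_le_nhds_constructibleTop_iff {R : Type*} [CommRing R]
    (u : Ultrafilter (PrimeSpectrum R)) (P : PrimeSpectrum R) :
    ↑u ≤ @nhds _ (constructibleTop (PrimeSpectrum R)) P ↔
      ∀ a : R, ({p : PrimeSpectrum R | a ∈ p.asIdeal} ∈ u ↔ a ∈ P.asIdeal) := by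
  rw [u.le_nhds_constructibleTop_iff_of_isTopologicalBasis isTopologicalBasis_basic_opens
    isCompact_basicOpen]
  refine forall_congr' fun a => ?_
  rw [show (basicOpen a : Set (PrimeSpectrum R)) = {p | a ∈ p.asIdeal}ᶜ from rfl,
    Ultrafilter.compl_mem_iff_notMem, mem_compl_iff, mem_ofPred_eq, not_iff_not]

theorem mem_closure_iff_exists_ultrafilter_map_le {X : Type*} [TopologicalSpace X]
    {Y : Set X} {x : X} :
    x ∈ closure Y ↔ ∃ 𝒰 : Ultrafilter Y, ↑(𝒰.map ((↑) : Y → X)) ≤ nhds x := by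
  rw [mem_closure_iff_ultrafilter]
  constructor
  · rintro ⟨u, hYu, hu⟩
    exact ⟨u.comap Subtype.val_injective (by rwa [Subtype.range_coe]), map_comap_le.trans hu⟩
  · rintro ⟨𝒰, h𝒰⟩
    exact ⟨𝒰.map (↑), Ultrafilter.mem_map.mpr (univ_mem' Subtype.prop), h𝒰⟩

/-- For `R` a commutative ring and `Y ⊆ Spec(R)`, a prime `P` lies in the constructible
(patch) closure of `Y` if and only if `P = P_{Y,𝒰} = {a ∈ R | V(a) ∩ Y ∈ 𝒰}` for some
ultrafilter `𝒰` on `Y`. -/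
theorem mem_closure_cons_iff_ultrafilter {R : Type*} [CommRing R]
    (Y : Set (PrimeSpectrum R)) (P : PrimeSpectrum R) :
    P ∈ @closure (PrimeSpectrum R) (constructibleTop (PrimeSpectrum R)) Y ↔
      ∃ 𝒰 : Ultrafilter Y,
        (P.asIdeal : Set R) = {a : R | {y : Y | a ∈ (y : PrimeSpectrum R).asIdeal} ∈ 𝒰} := by
  let := constructibleTop (PrimeSpectrum R)
  rw [mem_closure_iff_exists_ultrafilter_map_le]
  refine exists_congr fun 𝒰 => ?_
  rw [PrimeSpectrum.ultrafilter_le_nhds_constructibleTop_iff, Set.ext_iff]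
  exact forall_congr' fun a => Iff.comm
end

section
/- Let X be a spectral space and Y a quasi-compact subspace of X (with respect to the spectral topology). Then the generic closure Y^gen := {x ∈ X | x ⤳ y for some y ∈ Y} (equivalently {x | some y ∈ Y lies in the closure of {x}}) is closed in the constructible topology on X. -/
/-!
Every quasi-compact open set `U ⊇ Y` is closed under generization, so it contains `Y^gen`.
Conversely, if `y ∉ closure {x}` for all `y ∈ Y`, then the open set `(closure {x})ᶜ` contains
the quasi-compact set `Y`, hence contains a quasi-compact open `U ⊇ Y`, and `x ∉ U`. So `Y^gen`
is the intersection of the quasi-compact opens containing `Y`, each of which is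
constructibly closed.
-/

open TopologicalSpace Topology

theorem IsSpectralSpace.prespectralSpace {X : Type*} [TopologicalSpace X]
    (hX : IsSpectralSpace X) : PrespectralSpace X :=
  ⟨hX.2.2.1⟩

theorem isClosed_constructibleTop_of_isOpen_of_isCompact {X : Type*} [TopologicalSpace X]
    {U : Set X} (hUo : IsOpen U) (hUc : IsCompact U) : IsClosed[constructibleTop X] U :=
  @IsClosed.mk X (constructibleTop X) U <|
    isOpen_generateFrom_of_mem (Set.mem_union_right _ ⟨U, ⟨hUo, hUc⟩, rfl⟩)

theorem setOf_exists_mem_closure_singleton_eq_sInter {X : Type*} [TopologicalSpace X]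
    [PrespectralSpace X] {Y : Set X} (hY : IsCompact Y) :
    {x : X | ∃ y ∈ Y, y ∈ closure {x}} = ⋂₀ {U : Set X | IsOpen U ∧ IsCompact U ∧ Y ⊆ U} := by
  ext x
  constructor
  · rintro ⟨y, hyY, hxy⟩ U ⟨hUo, -, hYU⟩
    exact (specializes_iff_mem_closure.2 hxy).mem_open hUo (hYU hyY)
  · intro hx
    by_contra hgen
    have hY_sub : Y ⊆ (closure {x})ᶜ := fun y hyY hxy => hgen ⟨y, hyY, hxy⟩
    obtain ⟨U, hUc, hUo, hYU, hU_sub⟩ := PrespectralSpace.exists_isCompact_and_isOpen_between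
      hY isClosed_closure.isOpen_compl hY_sub
    exact hU_sub (hx U ⟨hUo, hUc, hYU⟩) (subset_closure rfl)

/-- In a spectral space `X`, the generic closure
`Y^gen = {x | some y ∈ Y lies in the closure of {x}}` of a quasi-compact subset `Y`
is closed in the constructible topology. -/
theorem genericClosure_isClosed_cons {X : Type*} [TopologicalSpace X]
    (hX : IsSpectralSpace X) (Y : Set X) (hY : IsCompact Y) :
    @IsClosed X (constructibleTop X) {x : X | ∃ y ∈ Y, y ∈ closure {x}} := by
  have := hX.prespectralSpace
  rw [setOf_exists_mem_closure_singleton_eq_sInter hY]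
  exact @isClosed_sInter X (constructibleTop X) _ fun U hU =>
    isClosed_constructibleTop_of_isOpen_of_isCompact hU.1 hU.2.1
end

section
/- Let X be a spectral space and Y ⊆ X. Then the closure of Y in the spectral topology equals the specialization closure of the constructible closure of Y, i.e., Cl(Y) = (Cl^cons(Y))^sp. -/
open TopologicalSpace Filter Set Topology

section PatchLimit

variable {X : Type*} [TopologicalSpace X] (𝒢 : Ultrafilter X)

def qcOpenLimitSet : Set X :=
  ⋂₀ (compl '' {U : Set X | IsOpen U ∧ IsCompact U ∧ U ∉ 𝒢})

theorem isClosed_qcOpenLimitSet : IsClosed (qcOpenLimitSet 𝒢) :=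
  isClosed_sInter <| forall_mem_image.2 fun _ hU => hU.1.isClosed_compl

theorem inter_qcOpenLimitSet_nonempty {W : Set X} (hWc : IsCompact W) (hW : W ∈ 𝒢) :
    (W ∩ qcOpenLimitSet 𝒢).Nonempty := by
  refine hWc.nonempty_inter_sInter (forall_mem_image.2 fun _ hU => hU.1.isClosed_compl)
    fun F hF hFfin => nonempty_of_mem (inter_mem hW ((sInter_mem hFfin).2 fun C hC => ?_))
  obtain ⟨U, hU, rfl⟩ := hF hC
  exact Ultrafilter.compl_mem_iff_notMem.2 hU.2.2

theorem mem_of_inter_qcOpenLimitSet_nonempty {U : Set X} (hUo : IsOpen U) (hUc : IsCompact U)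
    (hU : (U ∩ qcOpenLimitSet 𝒢).Nonempty) : U ∈ 𝒢 := by
  obtain ⟨z, hzU, hz⟩ := hU
  by_contra hU𝒢
  exact hz Uᶜ ⟨U, ⟨hUo, hUc, hU𝒢⟩, rfl⟩ hzU

theorem isIrreducible_qcOpenLimitSet [CompactSpace X]
    (hbasis : IsTopologicalBasis {U : Set X | IsOpen U ∧ IsCompact U})
    (hinter : ∀ U V : Set X, IsOpen U → IsCompact U → IsOpen V → IsCompact V →
      IsCompact (U ∩ V)) :
    IsIrreducible (qcOpenLimitSet 𝒢) := by
  refine ⟨by simpa using inter_qcOpenLimitSet_nonempty 𝒢 isCompact_univ univ_mem,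
    fun u v hu hv ⟨z₁, hz₁, hz₁u⟩ ⟨z₂, hz₂, hz₂v⟩ => ?_⟩
  obtain ⟨U₁, ⟨hU₁o, hU₁c⟩, hz₁U₁, hU₁u⟩ := hbasis.exists_subset_of_mem_open hz₁u hu
  obtain ⟨U₂, ⟨hU₂o, hU₂c⟩, hz₂U₂, hU₂v⟩ := hbasis.exists_subset_of_mem_open hz₂v hv
  have hU₁ := mem_of_inter_qcOpenLimitSet_nonempty 𝒢 hU₁o hU₁c ⟨z₁, hz₁U₁, hz₁⟩
  have hU₂ := mem_of_inter_qcOpenLimitSet_nonempty 𝒢 hU₂o hU₂c ⟨z₂, hz₂U₂, hz₂⟩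
  obtain ⟨z, ⟨hzU₁, hzU₂⟩, hz⟩ := inter_qcOpenLimitSet_nonempty 𝒢
    (hinter _ _ hU₁o hU₁c hU₂o hU₂c) (inter_mem hU₁ hU₂)
  exact ⟨z, hz, hU₁u hzU₁, hU₂v hzU₂⟩

theorem exists_forall_mem_iff_mem_ultrafilter [CompactSpace X]
    (hbasis : IsTopologicalBasis {U : Set X | IsOpen U ∧ IsCompact U})
    (hinter : ∀ U V : Set X, IsOpen U → IsCompact U → IsOpen V → IsCompact V →
      IsCompact (U ∩ V))
    (hgen : ∀ C : Set X, IsClosed C → IsIrreducible C → ∃ x : X, C = closure {x}) :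
    ∃ y : X, ∀ U : Set X, IsOpen U → IsCompact U → (y ∈ U ↔ U ∈ 𝒢) := by
  obtain ⟨y, hy⟩ := hgen _ (isClosed_qcOpenLimitSet 𝒢)
    (isIrreducible_qcOpenLimitSet 𝒢 hbasis hinter)
  refine ⟨y, fun U hUo hUc => ⟨fun hyU => ?_, fun hU => ?_⟩⟩
  · exact mem_of_inter_qcOpenLimitSet_nonempty 𝒢 hUo hUc
      ⟨y, hyU, hy ▸ subset_closure (mem_singleton y)⟩
  · obtain ⟨z, hzU, hz⟩ := inter_qcOpenLimitSet_nonempty 𝒢 hUc hU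
    rw [hy, ← specializes_iff_mem_closure] at hz
    exact hz.mem_open hUo hzU

end PatchLimit

section Constructible

variable {X : Type*} [TopologicalSpace X]

theorem constructibleTop_le
    (hbasis : IsTopologicalBasis {U : Set X | IsOpen U ∧ IsCompact U}) :
    constructibleTop X ≤ ‹TopologicalSpace X› := fun s hs => by
  obtain ⟨S, hS, rfl⟩ := hbasis.open_eq_sUnion hs
  exact @isOpen_sUnion X (constructibleTop X) _ fun U hU =>
    isOpen_generateFrom_of_mem (Or.inl (hS hU))

theorem le_nhds_constructibleTop {𝒢 : Ultrafilter X} {y : X}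
    (hy : ∀ U : Set X, IsOpen U → IsCompact U → (y ∈ U ↔ U ∈ 𝒢)) :
    (𝒢 : Filter X) ≤ @nhds X (constructibleTop X) y := by
  rw [constructibleTop, nhds_generateFrom]
  refine le_iInf₂ fun s ⟨hys, hs⟩ => le_principal_iff.2 ?_
  rcases hs with ⟨hso, hsc⟩ | ⟨U, ⟨hUo, hUc⟩, rfl⟩
  · exact (hy s hso hsc).1 hys
  · exact Ultrafilter.compl_mem_iff_notMem.2 fun hU => hys ((hy U hUo hUc).2 hU)

theorem specializes_of_le_nhds
    (hbasis : IsTopologicalBasis {U : Set X | IsOpen U ∧ IsCompact U})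
    {𝒢 : Ultrafilter X} {x y : X} (hx : (𝒢 : Filter X) ≤ 𝓝 x)
    (hy : ∀ U : Set X, IsOpen U → IsCompact U → (y ∈ U ↔ U ∈ 𝒢)) : y ⤳ x := by
  rw [specializes_iff_forall_open]
  intro o ho hxo
  obtain ⟨U, ⟨hUo, hUc⟩, hxU, hUo'⟩ := hbasis.exists_subset_of_mem_open hxo ho
  exact hUo' ((hy U hUo hUc).2 (hx (hUo.mem_nhds hxU)))

end Constructible

/-- In a spectral space `X`, the closure of `Y` in the spectral topology is the
specialization closure of the closure of `Y` in the constructible topology: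
`Cl(Y) = (Cl^cons(Y))^sp`. -/
theorem closure_eq_sp_of_cons_closure {X : Type*} [TopologicalSpace X]
    (hX : IsSpectralSpace X) (Y : Set X) :
    closure Y = {x : X | ∃ y ∈ @closure X (constructibleTop X) Y, x ∈ closure {y}} := by
  obtain ⟨_, -, hbasis, hinter, hgen⟩ := hX
  refine Subset.antisymm (fun x hx => ?_) fun x ⟨y, hy, hxy⟩ => ?_
  · obtain ⟨𝒢, hY, h𝒢x⟩ := mem_closure_iff_ultrafilter.1 hx
    obtain ⟨y, hy⟩ := exists_forall_mem_iff_mem_ultrafilter 𝒢 hbasis hinter hgen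
    refine ⟨y, ?_, specializes_iff_mem_closure.1 (specializes_of_le_nhds hbasis h𝒢x hy)⟩
    exact (@mem_closure_iff_ultrafilter X y Y (constructibleTop X)).2
      ⟨𝒢, hY, le_nhds_constructibleTop hy⟩
  · exact specializes_iff_mem_closure.2 hxy |>.mem_closed isClosed_closure
      (closure.mono (constructibleTop_le hbasis) hy)
end

section
/- Let K be a field and T an indeterminate over K. The map φ : Zar(K(T)) → Zar(K), W ↦ W ∩ K, is a continuous surjection with respect to the Zariski topologies, and its restriction to Zar_0(K(T)) := {V(T) | V ∈ Zar(K)} is a homeomorphism onto Zar(K). -/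
open scoped Polynomial

/-- The Zariski topology on the space of valuation subrings of a field `K`: it is generated
by the basic open sets `B_F = {V | F ⊆ V}`, for `F` a finite subset of `K`. -/
def zarTop (K : Type*) [Field K] : TopologicalSpace (ValuationSubring K) :=
  TopologicalSpace.generateFrom
    {S : Set (ValuationSubring K) |
      ∃ F : Finset K, S = {V : ValuationSubring K | ∀ x ∈ F, x ∈ V}}

/-- The trivial (Gauss) extension `V(T) = V[T]_{M[T]}` of a valuation domain `V` of `K`
to the rational function field `K(T)`, described as a subset of `RatFunc K`: the
fractions `f/g` with `f, g ∈ V[T]` and `g ∉ M[T]` (i.e. some coefficient of `g`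
is a unit of `V`). -/
noncomputable def trivialExtSet {K : Type*} [Field K] (V : ValuationSubring K) :
    Set (RatFunc K) :=
  {h | ∃ f g : K[X], (∀ i, f.coeff i ∈ V) ∧ (∀ i, g.coeff i ∈ V) ∧
    (∃ i, g.coeff i ≠ 0 ∧ (g.coeff i)⁻¹ ∈ V) ∧
    h = algebraMap K[X] (RatFunc K) f / algebraMap K[X] (RatFunc K) g}

/-- A subring `R` of `K(T)` is a `K`-function ring (in the sense of Halter-Koch) if
`T, T⁻¹ ∈ R` and `f(0) ∈ f·R` for every nonzero polynomial `f ∈ K[T]`. -/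
def IsKFunctionRing {K : Type*} [Field K] (R : Subring (RatFunc K)) : Prop :=
  RatFunc.X ∈ R ∧ (RatFunc.X : RatFunc K)⁻¹ ∈ R ∧
    ∀ f : K[X], f ≠ 0 → ∃ r ∈ R,
      algebraMap K (RatFunc K) (f.coeff 0) = algebraMap K[X] (RatFunc K) f * r

/-!
Write `v` for the valuation of `V`. If `q ≠ 0` and `q_j` is a coefficient of `q` of largest
valuation, then `p / q ∈ V(T)` exactly when `v (p_i) ≤ v (q_j)` for all `i`. The hard direction is
Gauss's lemma: if the coefficients of `p` and `q` are bounded by `a` and `b` and the bounds are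
attained, then some coefficient of `p * q` has valuation exactly `a * b` (look at the first indices
where the bounds are attained). This criterion shows that `V(T)` is a valuation ring with
`V(T) ∩ K = V`, and that `{V | h ∈ V(T)}` is a finite union of basic opens, so `V ↦ V(T)` is a
continuous inverse of `W ↦ W ∩ K` on `Zar₀(K(T))`.
-/

open Polynomial Finset

namespace Valuation

variable {R Γ₀ : Type*} [CommRing R] [LinearOrderedCommGroupWithZero Γ₀] (v : Valuation R Γ₀)

theorem exists_forall_map_coeff_le (p : R[X]) : ∃ j, ∀ i, v (p.coeff i) ≤ v (p.coeff j) := by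
  obtain ⟨j, -, hj⟩ :=
    (range (p.natDegree + 1)).exists_max_image (v ∘ p.coeff) nonempty_range_add_one
  refine ⟨j, fun i => ?_⟩
  rcases le_or_gt i p.natDegree with hi | hi
  · exact hj i (mem_range_succ_iff.mpr hi)
  · simp [coeff_eq_zero_of_natDegree_lt hi]

theorem forall_map_coeff_C_le_iff (x : R) (a : Γ₀) :
    (∀ i, v ((C x).coeff i) ≤ a) ↔ v x ≤ a :=
  ⟨fun h => by simpa using h 0, fun h i => by rw [coeff_C]; split_ifs <;> simp [h]⟩

theorem ne_zero_of_map_coeff_eq_one {p : R[X]} {i : ℕ} (h : v (p.coeff i) = 1) : p ≠ 0 := by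
  rintro rfl
  simp at h

theorem map_coeff_mul_le {p q : R[X]} {a b : Γ₀} (hp : ∀ i, v (p.coeff i) ≤ a)
    (hq : ∀ i, v (q.coeff i) ≤ b) (k : ℕ) : v ((p * q).coeff k) ≤ a * b := by
  rw [coeff_mul]
  exact v.map_sum_le fun x _ => (v.map_mul _ _).trans_le (mul_le_mul' (hp _) (hq _))

theorem exists_map_coeff_mul_eq {p q : R[X]} {a b : Γ₀} (hp : ∀ i, v (p.coeff i) ≤ a)
    (hq : ∀ i, v (q.coeff i) ≤ b) (hpa : ∃ i, v (p.coeff i) = a)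
    (hqb : ∃ j, v (q.coeff j) = b) : ∃ k, v ((p * q).coeff k) = a * b := by
  classical
  rcases eq_or_ne (a * b) 0 with hab | hab
  · exact ⟨0, le_antisymm (v.map_coeff_mul_le hp hq 0) (hab ▸ zero_le)⟩
  obtain ⟨ha, hb⟩ := mul_ne_zero_iff.mp hab
  set i₀ := Nat.find hpa
  set j₀ := Nat.find hqb
  have hlt : ∀ x ∈ (antidiagonal (i₀ + j₀)).erase (i₀, j₀),
      v (p.coeff x.1 * q.coeff x.2) < a * b := by
    rintro ⟨i, j⟩ hx
    obtain ⟨hne, hij⟩ := mem_erase.mp hx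
    rw [HasAntidiagonal.mem_antidiagonal] at hij
    rw [v.map_mul]
    rcases lt_or_ge i i₀ with hi | hi
    · exact mul_lt_mul_of_lt_of_le_of_nonneg_of_pos
        (lt_of_le_of_ne (hp i) (Nat.find_min hpa hi)) (hq j) zero_le (pos_iff_ne_zero.mpr hb)
    · have hj : j < j₀ := by
        by_contra! hj
        exact hne (Prod.ext (by simp only; omega) (by simp only; omega))
      exact mul_lt_mul_of_le_of_lt_of_nonneg_of_pos
        (hp i) (lt_of_le_of_ne (hq j) (Nat.find_min hqb hj)) zero_le (pos_iff_ne_zero.mpr ha)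
  have hmain : v (p.coeff i₀ * q.coeff j₀) = a * b := by
    rw [v.map_mul, Nat.find_spec hpa, Nat.find_spec hqb]
  refine ⟨i₀ + j₀, ?_⟩
  rw [coeff_mul, ← add_sum_erase _ _ (HasAntidiagonal.mem_antidiagonal.mpr rfl : (i₀, j₀) ∈ _),
    v.map_add_eq_of_lt_left (hmain ▸ v.map_sum_lt hab hlt)]
  exact hmain

end Valuation

theorem Valuation.coeff_ne_zero_of_forall_map_coeff_le {K Γ₀ : Type*} [Field K]
    [LinearOrderedCommGroupWithZero Γ₀] (v : Valuation K Γ₀) {p : K[X]} (hp : p ≠ 0) {j : ℕ}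
    (hj : ∀ i, v (p.coeff i) ≤ v (p.coeff j)) : p.coeff j ≠ 0 := by
  intro h0
  have := hj p.natDegree
  rw [h0, map_zero, le_zero_iff, v.zero_iff] at this
  exact leadingCoeff_ne_zero.mpr hp this

namespace ValuationSubring

variable {K : Type*} [Field K] (V : ValuationSubring K)

theorem valuation_eq_one_iff_inv_mem {x : K} (hx : x ∈ V) :
    V.valuation x = 1 ↔ x ≠ 0 ∧ x⁻¹ ∈ V := by
  rw [← valuation_le_one_iff, map_inv₀]
  refine ⟨fun h => ⟨V.valuation.ne_zero_iff.mp (by simp [h]), by simp [h]⟩, fun ⟨h0, hinv⟩ => ?_⟩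
  have hpos : 0 < V.valuation x := zero_lt_iff.mpr (V.valuation.ne_zero_iff.mpr h0)
  exact le_antisymm ((valuation_le_one_iff V x).mpr hx) ((inv_le_one₀ hpos).mp hinv)

theorem forall_mem_coeffs_div_mem_iff {p : K[X]} {c : K} (hc : c ≠ 0) :
    (∀ x ∈ p.coeffs, x / c ∈ V) ↔ ∀ i, V.valuation (p.coeff i) ≤ V.valuation c := by
  have hvc : 0 < V.valuation c := zero_lt_iff.mpr (V.valuation.ne_zero_iff.mpr hc)
  simp only [← valuation_le_one_iff, map_div₀, div_le_one₀ hvc, mem_coeffs_iff]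
  refine ⟨fun h i => ?_, fun h x ⟨i, _, hx⟩ => hx ▸ h i⟩
  by_cases hi : p.coeff i = 0
  · simp [hi]
  · exact h _ ⟨i, mem_support_iff.mpr hi, rfl⟩

end ValuationSubring

section TrivialExtension

variable {K : Type*} [Field K] {V : ValuationSubring K}

theorem mem_trivialExtSet_iff {h : RatFunc K} : h ∈ trivialExtSet V ↔
    ∃ f g : K[X], (∀ i, V.valuation (f.coeff i) ≤ 1) ∧ (∀ i, V.valuation (g.coeff i) ≤ 1) ∧
      (∃ i, V.valuation (g.coeff i) = 1) ∧
      h = algebraMap K[X] (RatFunc K) f / algebraMap K[X] (RatFunc K) g := by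
  simp only [trivialExtSet, Set.mem_ofPred_eq, V.valuation_le_one_iff]
  refine exists₂_congr fun f g => and_congr_right fun _ => and_congr_right fun hg => ?_
  simp only [V.valuation_eq_one_iff_inv_mem (hg _)]

theorem div_mem_trivialExtSet_iff {p q : K[X]} (hq : q ≠ 0) {j : ℕ}
    (hj : ∀ i, V.valuation (q.coeff i) ≤ V.valuation (q.coeff j)) :
    algebraMap K[X] (RatFunc K) p / algebraMap K[X] (RatFunc K) q ∈ trivialExtSet V ↔
      ∀ i, V.valuation (p.coeff i) ≤ V.valuation (q.coeff j) := by
  set v := V.valuation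
  set c := q.coeff j
  have hc : c ≠ 0 := v.coeff_ne_zero_of_forall_map_coeff_le hq hj
  have hvc : 0 < v c := zero_lt_iff.mpr (v.ne_zero_iff.mpr hc)
  rw [mem_trivialExtSet_iff]
  constructor
  · rintro ⟨f, g, hf, hg, ⟨k, hk⟩, heq⟩ i
    have hg0 : g ≠ 0 := v.ne_zero_of_map_coeff_eq_one hk
    have hcross : p * g = f * q := by
      apply RatFunc.algebraMap_injective K
      rw [map_mul, map_mul, ← div_eq_div_iff (RatFunc.algebraMap_ne_zero hq)
        (RatFunc.algebraMap_ne_zero hg0), heq]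
    obtain ⟨l, hl⟩ := v.exists_forall_map_coeff_le p
    obtain ⟨m, hm⟩ := v.exists_map_coeff_mul_eq hl hg ⟨l, rfl⟩ ⟨k, hk⟩
    calc v (p.coeff i) ≤ v (p.coeff l) := hl i
      _ = v ((f * q).coeff m) := by rw [← hcross, hm, mul_one]
      _ ≤ 1 * v c := v.map_coeff_mul_le hf hj m
      _ = v c := one_mul _
  · intro hp
    have hscale : ∀ (r : K[X]) i, v ((r * C c⁻¹).coeff i) = v (r.coeff i) / v c := by
      intro r i
      rw [coeff_mul_C, v.map_mul, map_inv₀, div_eq_mul_inv]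
    refine ⟨p * C c⁻¹, q * C c⁻¹, fun i => ?_, fun i => ?_, ⟨j, ?_⟩, ?_⟩
    · rw [hscale, div_le_one₀ hvc]; exact hp i
    · rw [hscale, div_le_one₀ hvc]; exact hj i
    · rw [hscale, div_self hvc.ne']
    · rw [map_mul, map_mul, mul_div_mul_right _ _
        (RatFunc.algebraMap_ne_zero (C_ne_zero.mpr (inv_ne_zero hc)))]

theorem algebraMap_mem_trivialExtSet_iff {p : K[X]} :
    algebraMap K[X] (RatFunc K) p ∈ trivialExtSet V ↔ ∀ i, V.valuation (p.coeff i) ≤ 1 := by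
  have h1 : ∀ i, V.valuation ((1 : K[X]).coeff i) ≤ 1 :=
    (V.valuation.forall_map_coeff_C_le_iff 1 1).mpr (map_one _).le
  simpa using div_mem_trivialExtSet_iff (p := p) one_ne_zero (j := 0) (by simpa using h1)

variable (V) in
noncomputable def trivialExt : ValuationSubring (RatFunc K) where
  carrier := trivialExtSet V
  zero_mem' := by
    simpa using (algebraMap_mem_trivialExtSet_iff (V := V) (p := 0)).mpr (by simp)
  one_mem' := by
    simpa using (algebraMap_mem_trivialExtSet_iff (V := V) (p := 1)).mpr
      ((V.valuation.forall_map_coeff_C_le_iff 1 1).mpr (map_one _).le)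
  neg_mem' := by
    intro a ha
    obtain ⟨f, g, hf, hg, hu, rfl⟩ := mem_trivialExtSet_iff.mp ha
    exact mem_trivialExtSet_iff.mpr ⟨-f, g, by simpa using hf, hg, hu, by rw [map_neg, neg_div]⟩
  mul_mem' := by
    intro a b ha hb
    obtain ⟨f₁, g₁, hf₁, hg₁, hu₁, rfl⟩ := mem_trivialExtSet_iff.mp ha
    obtain ⟨f₂, g₂, hf₂, hg₂, hu₂, rfl⟩ := mem_trivialExtSet_iff.mp hb
    refine mem_trivialExtSet_iff.mpr ⟨f₁ * f₂, g₁ * g₂, ?_, ?_, ?_, ?_⟩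
    · simpa using V.valuation.map_coeff_mul_le hf₁ hf₂
    · simpa using V.valuation.map_coeff_mul_le hg₁ hg₂
    · simpa using V.valuation.exists_map_coeff_mul_eq hg₁ hg₂ hu₁ hu₂
    · rw [map_mul, map_mul, div_mul_div_comm]
  add_mem' := by
    intro a b ha hb
    obtain ⟨f₁, g₁, hf₁, hg₁, hu₁, rfl⟩ := mem_trivialExtSet_iff.mp ha
    obtain ⟨f₂, g₂, hf₂, hg₂, hu₂, rfl⟩ := mem_trivialExtSet_iff.mp hb
    have hg₀ : ∀ {g : K[X]}, (∃ i, V.valuation (g.coeff i) = 1) →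
        algebraMap K[X] (RatFunc K) g ≠ 0 := fun ⟨_, hi⟩ =>
      RatFunc.algebraMap_ne_zero (V.valuation.ne_zero_of_map_coeff_eq_one hi)
    refine mem_trivialExtSet_iff.mpr ⟨f₁ * g₂ + g₁ * f₂, g₁ * g₂, fun i => ?_, ?_, ?_, ?_⟩
    · rw [coeff_add]
      exact V.valuation.map_add_le (by simpa using V.valuation.map_coeff_mul_le hf₁ hg₂ i)
        (by simpa using V.valuation.map_coeff_mul_le hg₁ hf₂ i)
    · simpa using V.valuation.map_coeff_mul_le hg₁ hg₂
    · simpa using V.valuation.exists_map_coeff_mul_eq hg₁ hg₂ hu₁ hu₂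
    · rw [div_add_div _ _ (hg₀ hu₁) (hg₀ hu₂), map_mul, map_add, map_mul, map_mul]
  mem_or_inv_mem' := by
    intro h
    rw [← h.num_div_denom, inv_div]
    obtain ⟨k, hk⟩ := V.valuation.exists_forall_map_coeff_le h.num
    obtain ⟨j, hj⟩ := V.valuation.exists_forall_map_coeff_le h.denom
    rcases le_or_gt (V.valuation (h.num.coeff k)) (V.valuation (h.denom.coeff j)) with hle | hlt
    · exact Or.inl ((div_mem_trivialExtSet_iff h.denom_ne_zero hj).mpr fun i => (hk i).trans hle)
    · have h0 : h.num ≠ 0 := fun h0 => by simp [h0] at hlt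
      exact Or.inr ((div_mem_trivialExtSet_iff h0 hk).mpr fun i => (hj i).trans hlt.le)

theorem mem_trivialExt {h : RatFunc K} : h ∈ trivialExt V ↔ h ∈ trivialExtSet V :=
  Iff.rfl

theorem comap_trivialExt (V : ValuationSubring K) :
    (trivialExt V).comap (algebraMap K (RatFunc K)) = V := by
  ext x
  rw [ValuationSubring.mem_comap, RatFunc.algebraMap_eq_C, ← RatFunc.algebraMap_C,
    ← V.valuation_le_one_iff, ← V.valuation.forall_map_coeff_C_le_iff]
  exact algebraMap_mem_trivialExtSet_iff

end TrivialExtension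

section ZariskiTopology

attribute [local instance] zarTop

variable {K : Type*} [Field K]

theorem isOpen_setOf_forall_mem (F : Finset K) :
    IsOpen {V : ValuationSubring K | ∀ x ∈ F, x ∈ V} :=
  .basic _ ⟨F, rfl⟩

theorem isOpen_setOf_mem_trivialExtSet (h : RatFunc K) :
    IsOpen {V : ValuationSubring K | h ∈ trivialExtSet V} := by
  classical
  set p := h.num
  set q := h.denom
  have hq0 : q ≠ 0 := h.denom_ne_zero
  have key : {V : ValuationSubring K | h ∈ trivialExtSet V} = ⋃ j ∈ q.support,
      {V | ∀ x ∈ (p.coeffs ∪ q.coeffs).image (· / q.coeff j), x ∈ V} := by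
    ext V
    simp only [Set.mem_ofPred_eq, Set.mem_iUnion, exists_prop, Finset.forall_mem_image,
      Finset.forall_mem_union]
    rw [← h.num_div_denom]
    constructor
    · intro hV
      obtain ⟨j, hj⟩ := V.valuation.exists_forall_map_coeff_le q
      have hqj := V.valuation.coeff_ne_zero_of_forall_map_coeff_le hq0 hj
      exact ⟨j, mem_support_iff.mpr hqj,
        (V.forall_mem_coeffs_div_mem_iff hqj).mpr ((div_mem_trivialExtSet_iff hq0 hj).mp hV),
        (V.forall_mem_coeffs_div_mem_iff hqj).mpr hj⟩
    · rintro ⟨j, hj, hp, hq⟩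
      have hqj := mem_support_iff.mp hj
      exact (div_mem_trivialExtSet_iff hq0 ((V.forall_mem_coeffs_div_mem_iff hqj).mp hq)).mpr
        ((V.forall_mem_coeffs_div_mem_iff hqj).mp hp)
  rw [key]
  exact isOpen_biUnion fun j _ => isOpen_setOf_forall_mem _

theorem continuous_comap_algebraMap :
    Continuous fun W : ValuationSubring (RatFunc K) => W.comap (algebraMap K (RatFunc K)) := by
  classical
  refine continuous_generateFrom_iff.mpr ?_
  rintro _ ⟨F, rfl⟩
  convert isOpen_setOf_forall_mem (F.image (algebraMap K (RatFunc K))) using 1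
  ext W
  simp

theorem continuous_trivialExt : Continuous (trivialExt : ValuationSubring K → _) := by
  refine continuous_generateFrom_iff.mpr ?_
  rintro _ ⟨F, rfl⟩
  convert isOpen_biInter_finset fun x (_ : x ∈ F) => isOpen_setOf_mem_trivialExtSet x using 1
  ext V
  simp [mem_trivialExt]

end ZariskiTopology

/-- The canonical map `φ : Zar(K(T)) → Zar(K)`, `W ↦ W ∩ K`, is a continuous surjection
for the Zariski topologies, and its restriction to
`Zar₀(K(T)) = {V(T) | V ∈ Zar(K)}` is a homeomorphism onto `Zar(K)`. -/
theorem zar_restriction_homeomorph (K : Type*) [Field K] :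
    letI : TopologicalSpace (ValuationSubring (RatFunc K)) := zarTop (RatFunc K)
    letI : TopologicalSpace (ValuationSubring K) := zarTop K
    Continuous (fun W : ValuationSubring (RatFunc K) =>
        W.comap (algebraMap K (RatFunc K))) ∧
    Function.Surjective (fun W : ValuationSubring (RatFunc K) =>
        W.comap (algebraMap K (RatFunc K))) ∧
    IsHomeomorph
      (fun W : {W : ValuationSubring (RatFunc K) //
          ∃ V : ValuationSubring K, (W : Set (RatFunc K)) = trivialExtSet V} =>
        (W : ValuationSubring (RatFunc K)).comap (algebraMap K (RatFunc K))) := by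
  let : TopologicalSpace (ValuationSubring (RatFunc K)) := zarTop (RatFunc K)
  let : TopologicalSpace (ValuationSubring K) := zarTop K
  refine ⟨continuous_comap_algebraMap, fun V => ⟨trivialExt V, comap_trivialExt V⟩, ?_⟩
  rw [isHomeomorph_iff_exists_inverse]
  refine ⟨continuous_comap_algebraMap.comp continuous_subtype_val,
    fun V => ⟨trivialExt V, V, rfl⟩, ?_, comap_trivialExt,
    continuous_trivialExt.subtype_mk _⟩
  rintro ⟨W, V, hWV⟩
  obtain rfl : W = trivialExt V := SetLike.coe_injective hWV
  exact Subtype.ext (congrArg trivialExt (comap_trivialExt V))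
end

section
/- Let K be a field, T an indeterminate, and R a K-function ring in K(T). Then R is a Bézout domain with quotient field K(T); moreover, for every polynomial f = f₀ + f₁T + ... + f_rT^r ∈ K[T], the ideal (f₀, f₁, ..., f_r)R is principal and equals fR. -/
/-!
Since `T⁻¹ ∈ R` and `f = T · divX f + f(0)` with `f(0) ∈ fR`, the polynomial `divX f` lies in
`fR`; iterating, every coefficient of `f` lies in `fR`, and conversely `f = ∑ fᵢ Tⁱ` with
`Tⁱ ∈ R`. So `fR` is the `R`-module spanned by the coefficients of `f`. When `deg f < N`, the
coefficients of `f + T^N g` are those of `f` and of `g`, whence `fR + gR = (f + T^N g)R`; after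
clearing denominators, every two-generated `R`-submodule of `K(T)` is cyclic. For `x, y ∈ R`
this is the Bézout property, and for `x` and `1` it writes `x` as a quotient of elements of `R`.
-/

open scoped Polynomial

open Polynomial Pointwise

namespace Polynomial

variable {R : Type*} [Semiring R]

theorem range_coeff_subset_range_coeff_add_X_pow_mul_left {f : R[X]} {N : ℕ}
    (hN : f.natDegree < N) (g : R[X]) :
    Set.range f.coeff ⊆ Set.range (f + X ^ N * g).coeff := by
  rintro _ ⟨i, rfl⟩
  rcases lt_or_ge i N with hi | hi
  · exact ⟨i, by rw [coeff_add, coeff_X_pow_mul', if_neg (by omega), add_zero]⟩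
  · rw [coeff_eq_zero_of_natDegree_lt (by omega)]
    exact ⟨_, coeff_eq_zero_of_natDegree_lt (lt_add_one _)⟩

theorem range_coeff_subset_range_coeff_add_X_pow_mul_right {f : R[X]} {N : ℕ}
    (hN : f.natDegree < N) (g : R[X]) :
    Set.range g.coeff ⊆ Set.range (f + X ^ N * g).coeff := by
  rintro _ ⟨j, rfl⟩
  exact ⟨j + N, by rw [coeff_add, coeff_X_pow_mul, coeff_eq_zero_of_natDegree_lt (by omega),
    zero_add]⟩

end Polynomial

theorem Subring.isBezout_of_span_pair_eq_span_singleton {A : Type*} [CommRing A] (R : Subring A)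
    (h : ∀ x y : A, ∃ z, Submodule.span R {x, y} = Submodule.span R {z}) : IsBezout R := by
  rw [IsBezout.iff_span_pair_isPrincipal]
  intro a b
  obtain ⟨z, hz⟩ := h a b
  obtain ⟨s, t, hst⟩ := Submodule.mem_span_pair.mp (hz ▸ Submodule.mem_span_singleton_self z)
  have hzR : z ∈ R := hst ▸ add_mem (mul_mem s.2 a.2) (mul_mem t.2 b.2)
  refine ⟨⟨⟨z, hzR⟩, Submodule.map_injective_of_injective (f := Algebra.linearMap R A)
    Subtype.val_injective ?_⟩⟩
  simp only [Submodule.map_span, Set.image_pair, Set.image_singleton]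
  exact hz

theorem Subring.isFractionRing_of_span_pair_eq_span_singleton {L : Type*} [Field L]
    (R : Subring L) (h : ∀ x : L, ∃ z, Submodule.span R {x, 1} = Submodule.span R {z}) :
    IsFractionRing R L := by
  refine IsFractionRing.of_field _ _ fun x => ?_
  obtain ⟨z, hz⟩ := h x
  obtain ⟨u, hu⟩ := Submodule.mem_span_singleton.mp
    (hz ▸ Submodule.mem_span_of_mem (by simp) : x ∈ _)
  obtain ⟨v, hv⟩ := Submodule.mem_span_singleton.mp
    (hz ▸ Submodule.mem_span_of_mem (by simp) : (1 : L) ∈ _)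
  rw [Subring.smul_def, smul_eq_mul] at hu hv
  refine ⟨u, v, (eq_div_iff (left_ne_zero_of_mul_eq_one hv)).mpr ?_⟩
  change x * (v : L) = u
  linear_combination (u : L) * hv - (v : L) * hu

namespace IsKFunctionRing

variable {K : Type*} [Field K] {R : Subring (RatFunc K)} (hR : IsKFunctionRing R)
include hR

local notation "φ" => algebraMap K[X] (RatFunc K)

theorem coeff_zero_mem_span (f : K[X]) :
    algebraMap K (RatFunc K) (f.coeff 0) ∈ Submodule.span R {φ f} := by
  rcases eq_or_ne f 0 with rfl | hf
  · simp
  obtain ⟨r, hr, hf0⟩ := hR.2.2 f hf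
  exact Submodule.mem_span_singleton.mpr ⟨⟨r, hr⟩, hf0 ▸ mul_comm r (φ f)⟩

theorem divX_mem_span (f : K[X]) : φ f.divX ∈ Submodule.span R {φ f} := by
  have hsplit : φ f = RatFunc.X * φ f.divX + algebraMap K (RatFunc K) (f.coeff 0) := by
    conv_lhs => rw [← X_mul_divX_add f]
    rw [map_add, map_mul, RatFunc.algebraMap_X, RatFunc.algebraMap_C, RatFunc.algebraMap_eq_C]
  have hdivX : φ f.divX = RatFunc.X⁻¹ * (φ f - algebraMap K (RatFunc K) (f.coeff 0)) := by
    rw [hsplit, add_sub_cancel_right, inv_mul_cancel_left₀ RatFunc.X_ne_zero]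
  rw [hdivX]
  exact Submodule.smul_mem _ ⟨_, hR.2.1⟩
    (sub_mem (Submodule.mem_span_singleton_self _) (hR.coeff_zero_mem_span f))

theorem coeff_mem_span (f : K[X]) (i : ℕ) :
    algebraMap K (RatFunc K) (f.coeff i) ∈ Submodule.span R {φ f} := by
  induction i generalizing f with
  | zero => exact hR.coeff_zero_mem_span f
  | succ i ih =>
    rw [← coeff_divX]
    exact Submodule.span_singleton_le_iff_mem _ _ |>.mpr (hR.divX_mem_span f) (ih f.divX)

theorem mem_span_coeff (f : K[X]) :
    φ f ∈ Submodule.span R (Set.range fun i => algebraMap K (RatFunc K) (f.coeff i)) := by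
  have hsum := congrArg φ f.as_sum_range_C_mul_X_pow
  simp only [map_sum, map_mul, map_pow, RatFunc.algebraMap_X, RatFunc.algebraMap_C,
    ← RatFunc.algebraMap_eq_C] at hsum
  rw [hsum]
  refine Submodule.sum_mem _ fun i _ => ?_
  rw [mul_comm]
  exact Submodule.smul_mem _ (⟨_, pow_mem hR.1 i⟩ : R) (Submodule.subset_span ⟨i, rfl⟩)

theorem span_coeff_eq (f : K[X]) :
    Submodule.span R (Set.range fun i => algebraMap K (RatFunc K) (f.coeff i)) =
      Submodule.span R {φ f} := by
  refine le_antisymm (Submodule.span_le.mpr ?_) (Submodule.span_le.mpr ?_)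
  · rintro _ ⟨i, rfl⟩
    exact hR.coeff_mem_span f i
  · simpa using hR.mem_span_coeff f

theorem mem_span_of_range_coeff_subset {f p : K[X]} (h : Set.range f.coeff ⊆ Set.range p.coeff) :
    φ f ∈ Submodule.span R {φ p} := by
  rw [← hR.span_coeff_eq p]
  refine Submodule.span_mono ?_ (hR.mem_span_coeff f)
  rintro _ ⟨i, rfl⟩
  obtain ⟨j, hj⟩ := h ⟨i, rfl⟩
  exact ⟨j, congrArg _ hj⟩

theorem span_pair_eq_span_add_X_pow_mul {f : K[X]} {N : ℕ} (hN : f.natDegree < N) (g : K[X]) :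
    Submodule.span R {φ f, φ g} = Submodule.span R {φ (f + X ^ N * g)} := by
  refine le_antisymm (Submodule.span_le.mpr ?_) (Submodule.span_le.mpr ?_)
  · rintro _ (rfl | rfl)
    · exact hR.mem_span_of_range_coeff_subset
        (range_coeff_subset_range_coeff_add_X_pow_mul_left hN g)
    · exact hR.mem_span_of_range_coeff_subset
        (range_coeff_subset_range_coeff_add_X_pow_mul_right hN g)
  · rintro _ rfl
    rw [map_add, map_mul, map_pow, RatFunc.algebraMap_X]
    exact Submodule.mem_span_pair.mpr
      ⟨1, ⟨_, pow_mem hR.1 N⟩, by rw [one_smul, Subring.smul_def, smul_eq_mul]⟩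

theorem exists_span_pair_eq_span_singleton (x y : RatFunc K) :
    ∃ z, Submodule.span R {x, y} = Submodule.span R {z} := by
  have hx := RatFunc.algebraMap_ne_zero x.denom_ne_zero
  have hy := RatFunc.algebraMap_ne_zero y.denom_ne_zero
  obtain ⟨f, g, d, rfl, rfl⟩ :
      ∃ f g d : K[X], x = (φ d)⁻¹ * φ f ∧ y = (φ d)⁻¹ * φ g := by
    refine ⟨x.num * y.denom, y.num * x.denom, x.denom * y.denom, ?_, ?_⟩
    · conv_lhs => rw [← x.num_div_denom]
      simp only [map_mul]
      field_simp
    · conv_lhs => rw [← y.num_div_denom]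
      simp only [map_mul]
      field_simp
  set p := f + X ^ (f.natDegree + 1) * g
  refine ⟨(φ d)⁻¹ * φ p, ?_⟩
  calc Submodule.span R {(φ d)⁻¹ * φ f, (φ d)⁻¹ * φ g}
      = (φ d)⁻¹ • Submodule.span R {φ f, φ g} := by
        rw [← Submodule.span_smul, Set.smul_set_insert, Set.smul_set_singleton]; rfl
    _ = (φ d)⁻¹ • Submodule.span R {φ p} := by
        rw [hR.span_pair_eq_span_add_X_pow_mul (lt_add_one _)]
    _ = Submodule.span R {(φ d)⁻¹ * φ p} := by
        rw [← Submodule.span_smul, Set.smul_set_singleton]; rfl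

end IsKFunctionRing

/-- A `K`-function ring `R` is a Bézout domain with quotient field `K(T)`; moreover, for
every polynomial `f = f₀ + f₁T + ⋯ + f_rT^r ∈ K[T]`, the `R`-module generated by the
coefficients `f₀, …, f_r` equals the principal `R`-module `fR` (inside `K(T)`). -/
theorem kFunctionRing_bezout {K : Type*} [Field K] (R : Subring (RatFunc K))
    (hR : IsKFunctionRing R) :
    IsBezout ↥R ∧ IsFractionRing ↥R (RatFunc K) ∧
      ∀ f : K[X],
        Submodule.span ↥R (Set.range fun i => algebraMap K (RatFunc K) (f.coeff i)) =
          Submodule.span ↥R {algebraMap K[X] (RatFunc K) f} :=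
  ⟨R.isBezout_of_span_pair_eq_span_singleton hR.exists_span_pair_eq_span_singleton,
    R.isFractionRing_of_span_pair_eq_span_singleton
      fun x => hR.exists_span_pair_eq_span_singleton x 1,
    hR.span_coeff_eq⟩
end

section
/- Let K be a field, T an indeterminate, and V a valuation domain of K with maximal ideal M. Then the trivial extension V(T) := V[T]_{M[T]} is a K-function ring, i.e., T and T^{-1} belong to V(T), and f(0) ∈ f·V(T) for every nonzero f ∈ K[T]. -/
open scoped Polynomial

/-! `V(T)` is the image in `K(T)` of the localization of `V[T]` at `M[T]`; this is a localization
at a prime ideal because `V[T] / M[T] = (V/M)[T]` is a domain (Gauss's lemma in disguise), so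
`V(T)` is a subring, and unwinding the localization gives back the fractions of `trivialExtSet`.
For `f ≠ 0`, dividing by a coefficient `a` of `f` that divides all the others in `V` makes `f / a` primitive, hence
`f(0) / f = (f(0) / a) / (f / a) ∈ V(T)`. -/

open Polynomial IsLocalRing

theorem Localization.mem_range_lift_iff_exists_eq_div {A L : Type*} [CommRing A] [Field L]
    {S : Submonoid A} {φ : A →+* L} (hφ : ∀ s : S, IsUnit (φ s)) {x : L} :
    x ∈ (IsLocalization.lift (S := Localization S) hφ).range ↔ ∃ a, ∃ s ∈ S, x = φ a / φ s := by
  constructor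
  · rintro ⟨y, rfl⟩
    obtain ⟨⟨a, s⟩, rfl⟩ := IsLocalization.mk'_surjective S y
    refine ⟨a, s, s.2, (IsLocalization.lift_mk'_spec _ _ _ _).2 ?_⟩
    rw [mul_div_cancel₀ _ (hφ s).ne_zero]
  · rintro ⟨a, s, hs, rfl⟩
    refine ⟨IsLocalization.mk' _ a ⟨s, hs⟩, (IsLocalization.lift_mk'_spec _ _ _ _).2 ?_⟩
    rw [mul_div_cancel₀ _ (hφ ⟨s, hs⟩).ne_zero]

namespace ValuationSubring

variable {K : Type*} [Field K] (V : ValuationSubring K)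

theorem coeff_mem_iff_mem_lifts (p : K[X]) :
    (∀ i, p.coeff i ∈ V) ↔ p ∈ lifts (algebraMap V K) := by
  simp [lifts_iff_coeff_lifts]

theorem coe_notMem_maximalIdeal_iff (a : V) :
    a ∉ maximalIdeal V ↔ (a : K) ≠ 0 ∧ (a : K)⁻¹ ∈ V := by
  rw [← coe_mem_nonunits_iff, mem_nonunits_iff_or]
  tauto

theorem notMem_map_C_maximalIdeal_iff (q : V[X]) :
    q ∉ (maximalIdeal V).map (C : V →+* V[X]) ↔
      ∃ i, (q.coeff i : K) ≠ 0 ∧ (q.coeff i : K)⁻¹ ∈ V := by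
  simp only [Ideal.mem_map_C_iff, not_forall, coe_notMem_maximalIdeal_iff]

theorem exists_coeff_forall_coeff_div_mem {f : K[X]} (hf : f ≠ 0) :
    ∃ i, f.coeff i ≠ 0 ∧ ∀ j, f.coeff j / f.coeff i ∈ V := by
  obtain ⟨i, hi, hmax⟩ := Finset.exists_max_image f.support
    (fun i => V.valuation (f.coeff i)) (support_nonempty.2 hf)
  have hi0 : f.coeff i ≠ 0 := mem_support_iff.1 hi
  refine ⟨i, hi0, fun j => ?_⟩
  rw [← valuation_le_one_iff, map_div₀, div_le_one₀ ((V.valuation).pos_iff.2 hi0)]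
  by_cases hj : j ∈ f.support
  · exact hmax j hj
  · simp [notMem_support_iff.1 hj]

noncomputable def polyToRatFunc : V[X] →+* RatFunc K :=
  (algebraMap K[X] (RatFunc K)).comp (mapRingHom (algebraMap V K))

theorem polyToRatFunc_apply (q : V[X]) :
    V.polyToRatFunc q = algebraMap K[X] (RatFunc K) (q.map (algebraMap V K)) := rfl

theorem isUnit_polyToRatFunc (s : ((maximalIdeal V).map (C : V →+* V[X])).primeCompl) :
    IsUnit (V.polyToRatFunc s) := by
  rw [polyToRatFunc_apply]
  refine (RatFunc.algebraMap_ne_zero ?_).isUnit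
  rw [Ne, Polynomial.map_eq_zero_iff (FaithfulSMul.algebraMap_injective V K)]
  intro h
  exact s.2 (h ▸ Ideal.zero_mem _)

-- `M[T]` is prime by the instance `Ideal.isPrime_map_C_of_isPrime`.
noncomputable def trivialExt : Subring (RatFunc K) :=
  RingHom.range (R := Localization ((maximalIdeal V).map (C : V →+* V[X])).primeCompl)
    (IsLocalization.lift V.isUnit_polyToRatFunc)

theorem mem_trivialExt_iff {x : RatFunc K} :
    x ∈ V.trivialExt ↔ ∃ f : V[X], ∃ g ∉ (maximalIdeal V).map (C : V →+* V[X]),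
      x = V.polyToRatFunc f / V.polyToRatFunc g :=
  Localization.mem_range_lift_iff_exists_eq_div _

theorem coe_trivialExt : (V.trivialExt : Set (RatFunc K)) = trivialExtSet V := by
  ext x
  rw [SetLike.mem_coe, mem_trivialExt_iff]
  simp only [trivialExtSet, Set.mem_ofPred_eq, coeff_mem_iff_mem_lifts, mem_lifts]
  constructor
  · rintro ⟨f, g, hg, rfl⟩
    exact ⟨_, _, ⟨f, rfl⟩, ⟨g, rfl⟩, by simpa [notMem_map_C_maximalIdeal_iff] using hg, rfl⟩
  · rintro ⟨_, _, ⟨f, rfl⟩, ⟨g, rfl⟩, hg, rfl⟩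
    exact ⟨f, g, by simpa [notMem_map_C_maximalIdeal_iff] using hg, rfl⟩

theorem ratFuncX_mem_trivialExt : RatFunc.X ∈ V.trivialExt :=
  V.mem_trivialExt_iff.2 ⟨X, 1, Ideal.one_notMem _, by simp [polyToRatFunc_apply]⟩

theorem ratFuncX_inv_mem_trivialExt : (RatFunc.X : RatFunc K)⁻¹ ∈ V.trivialExt :=
  V.mem_trivialExt_iff.2 ⟨1, X, (V.notMem_map_C_maximalIdeal_iff X).2 ⟨1, by simp⟩,
    by simp [polyToRatFunc_apply]⟩

theorem exists_mem_trivialExt_coeff_zero_eq_mul {f : K[X]} (hf : f ≠ 0) :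
    ∃ r ∈ V.trivialExt,
      algebraMap K (RatFunc K) (f.coeff 0) = algebraMap K[X] (RatFunc K) f * r := by
  obtain ⟨i, hi0, hdiv⟩ := V.exists_coeff_forall_coeff_div_mem hf
  refine ⟨algebraMap K[X] _ (C (f.coeff 0 / f.coeff i)) /
    algebraMap K[X] _ (C (f.coeff i)⁻¹ * f), ?_, ?_⟩
  · rw [← SetLike.mem_coe, coe_trivialExt]
    refine ⟨_, _, fun n => ?_, fun n => ?_, ⟨i, ?_, ?_⟩, rfl⟩
    · rw [coeff_C]
      split_ifs
      exacts [hdiv 0, V.zero_mem]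
    · rw [coeff_C_mul, inv_mul_eq_div]
      exact hdiv n
    · simp [coeff_C_mul, hi0]
    · simp [coeff_C_mul, hi0]
  · have hf' : algebraMap K[X] (RatFunc K) f ≠ 0 := RatFunc.algebraMap_ne_zero hf
    simp only [map_mul, RatFunc.algebraMap_C]
    field_simp
    rw [← map_div₀, RatFunc.algebraMap_eq_C]
    field_simp

end ValuationSubring

/-- For a valuation domain `V` of `K`, the trivial extension `V(T) = V[T]_{M[T]}` is a
`K`-function ring: it is a subring of `K(T)` containing `T` and `T⁻¹` such that
`f(0) ∈ f·V(T)` for every nonzero `f ∈ K[T]`. -/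
theorem trivialExt_isKFunctionRing {K : Type*} [Field K] (V : ValuationSubring K) :
    ∃ R : Subring (RatFunc K), (R : Set (RatFunc K)) = trivialExtSet V ∧
      IsKFunctionRing R :=
  ⟨V.trivialExt, V.coe_trivialExt, V.ratFuncX_mem_trivialExt, V.ratFuncX_inv_mem_trivialExt,
    fun _ hf => V.exists_mem_trivialExt_coeff_zero_eq_mul hf⟩
end

section
/- Let K be a field, T an indeterminate, and R a K-function ring in K(T). Then every valuation overring W of R in K(T) is of the form W = (W ∩ K)(T), i.e., W is the trivial extension to K(T) of the valuation domain W ∩ K of K. -/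
open scoped Polynomial

/-!
Since `T⁻¹ ∈ W` and `p(0)/p ∈ W` for every nonzero `p ∈ K[T]`, the identity
`p = T·(p div T) + p(0)` gives `(p div T)/p = T⁻¹(1 - p(0)/p) ∈ W`, and by induction `pᵢ/p ∈ W`
for every coefficient `pᵢ` of `p`. Hence a fraction `f/g` with `f, g ∈ V[T]` (`V = W ∩ K`) and a unit
coefficient `gᵢ` of `g` is `f · gᵢ⁻¹ · (gᵢ/g) ∈ W`. Conversely, write `h ∈ W` as `f/g` with `g`
divided by a coefficient of maximal value, so that `g ∈ V[T]` has a coefficient `1`; then every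
coefficient `fᵢ = (fᵢ/f) · h · g` of `f` lies in `W ∩ K = V`.
-/

theorem Polynomial.exists_coeff_forall_coeff_div_mem {K : Type*} [Field K]
    (V : ValuationSubring K) {g : K[X]} (hg : g ≠ 0) :
    ∃ j, g.coeff j ≠ 0 ∧ ∀ i, g.coeff i / g.coeff j ∈ V := by
  obtain ⟨j, hj, hmax⟩ := g.support.exists_max_image (fun i => V.valuation (g.coeff i))
    (Polynomial.support_nonempty.mpr hg)
  have hj0 : g.coeff j ≠ 0 := Polynomial.mem_support_iff.mp hj
  refine ⟨j, hj0, fun i => ?_⟩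
  by_cases hi : g.coeff i = 0
  · rw [hi, zero_div]
    exact zero_mem V
  rw [← V.valuation_le_one_iff, map_div₀, div_le_one₀ ((Valuation.pos_iff _).mpr hj0)]
  exact hmax i (Polynomial.mem_support_iff.mpr hi)

namespace RatFunc

variable {K : Type*} [Field K]

theorem algebraMap_mem_of_coeff_mem {S : Subring (RatFunc K)} (hX : X ∈ S) {p : K[X]}
    (hp : ∀ i, C (p.coeff i) ∈ S) : algebraMap K[X] (RatFunc K) p ∈ S := by
  rw [← aeval_X_left_eq_algebraMap, Polynomial.aeval_eq_sum_range]
  exact sum_mem fun i _ => by rw [smul_eq_C_mul]; exact mul_mem (hp i) (pow_mem hX i)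

theorem coeff_div_mem_of_coeff_zero_div_mem {S : Subring (RatFunc K)} (hXinv : X⁻¹ ∈ S)
    (h0 : ∀ {p : K[X]}, p ≠ 0 → C (p.coeff 0) / algebraMap K[X] (RatFunc K) p ∈ S)
    (i : ℕ) {p : K[X]} (hp : p ≠ 0) : C (p.coeff i) / algebraMap K[X] (RatFunc K) p ∈ S := by
  induction i generalizing p with
  | zero => exact h0 hp
  | succ i ih =>
    by_cases hq : p.divX = 0
    · rw [← Polynomial.coeff_divX, hq, Polynomial.coeff_zero, map_zero, zero_div]
      exact zero_mem S
    have hP : algebraMap K[X] (RatFunc K) p ≠ 0 := algebraMap_ne_zero hp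
    have hQ : algebraMap K[X] (RatFunc K) p.divX ≠ 0 := algebraMap_ne_zero hq
    have hsplit : X * algebraMap K[X] (RatFunc K) p.divX + C (p.coeff 0)
        = algebraMap K[X] (RatFunc K) p := by
      rw [← algebraMap_X, ← algebraMap_C, ← map_mul, ← map_add, Polynomial.X_mul_divX_add]
    have hquot : algebraMap K[X] (RatFunc K) p.divX / algebraMap K[X] (RatFunc K) p
        = X⁻¹ * (1 - C (p.coeff 0) / algebraMap K[X] (RatFunc K) p) := by
      field_simp [X_ne_zero, hP]
      linear_combination hsplit
    have hshift : C (p.coeff (i + 1)) / algebraMap K[X] (RatFunc K) p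
        = C (p.divX.coeff i) / algebraMap K[X] (RatFunc K) p.divX
          * (algebraMap K[X] (RatFunc K) p.divX / algebraMap K[X] (RatFunc K) p) := by
      rw [Polynomial.coeff_divX, div_mul_div_cancel₀ hQ]
    rw [hshift, hquot]
    exact mul_mem (ih hq) (mul_mem hXinv (sub_mem (one_mem S) (h0 hp)))

theorem C_coeff_mem_of_div_mem {S : Subring (RatFunc K)}
    (hcoeff : ∀ i {p : K[X]}, p ≠ 0 → C (p.coeff i) / algebraMap K[X] (RatFunc K) p ∈ S)
    {f g : K[X]} (hg : g ≠ 0) (hgS : algebraMap K[X] (RatFunc K) g ∈ S)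
    (hfg : algebraMap K[X] (RatFunc K) f / algebraMap K[X] (RatFunc K) g ∈ S) (i : ℕ) :
    C (f.coeff i) ∈ S := by
  by_cases hf : f = 0
  · rw [hf, Polynomial.coeff_zero, map_zero]
    exact zero_mem S
  have hfactor : C (f.coeff i) = C (f.coeff i) / algebraMap K[X] (RatFunc K) f
      * (algebraMap K[X] (RatFunc K) f / algebraMap K[X] (RatFunc K) g)
      * algebraMap K[X] (RatFunc K) g := by
    field_simp [algebraMap_ne_zero hf, algebraMap_ne_zero hg]
  rw [hfactor]
  exact mul_mem (mul_mem (hcoeff i hf) hfg) hgS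

variable {W : ValuationSubring (RatFunc K)}

theorem trivialExtSet_comap_subset (hX : X ∈ W)
    (hcoeff : ∀ i {p : K[X]}, p ≠ 0 → C (p.coeff i) / algebraMap K[X] (RatFunc K) p ∈ W) :
    trivialExtSet (W.comap (algebraMap K (RatFunc K))) ⊆ W := by
  rintro _ ⟨f, g, hf, -, ⟨i, hgi, hgi_inv⟩, rfl⟩
  have hg : g ≠ 0 := fun h => hgi (by rw [h, Polynomial.coeff_zero])
  have hfactor : algebraMap K[X] (RatFunc K) f / algebraMap K[X] (RatFunc K) g
      = algebraMap K[X] (RatFunc K) f * C (g.coeff i)⁻¹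
        * (C (g.coeff i) / algebraMap K[X] (RatFunc K) g) := by
    rw [map_inv₀]
    field_simp [algebraMap_ne_zero hg, (map_ne_zero C).mpr hgi]
  rw [hfactor]
  exact mul_mem (mul_mem (algebraMap_mem_of_coeff_mem (S := W.toSubring) hX hf) hgi_inv)
    (hcoeff i hg)

theorem subset_trivialExtSet_comap (hX : X ∈ W)
    (hcoeff : ∀ i {p : K[X]}, p ≠ 0 → C (p.coeff i) / algebraMap K[X] (RatFunc K) p ∈ W) :
    (W : Set (RatFunc K)) ⊆ trivialExtSet (W.comap (algebraMap K (RatFunc K))) := by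
  intro h hh
  obtain ⟨j, hj0, hj⟩ := h.denom.exists_coeff_forall_coeff_div_mem
    (W.comap (algebraMap K (RatFunc K))) h.denom_ne_zero
  set c := h.denom.coeff j
  set f := Polynomial.C c⁻¹ * h.num
  set g := Polynomial.C c⁻¹ * h.denom
  have hg_coeff (i : ℕ) : g.coeff i ∈ W.comap (algebraMap K (RatFunc K)) := by
    rw [Polynomial.coeff_C_mul, inv_mul_eq_div]
    exact hj i
  have hgj : g.coeff j = 1 := by rw [Polynomial.coeff_C_mul, inv_mul_cancel₀ hj0]
  have hg : g ≠ 0 := fun h0 => one_ne_zero (by rw [← hgj, h0, Polynomial.coeff_zero])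
  have hfg : h = algebraMap K[X] (RatFunc K) f / algebraMap K[X] (RatFunc K) g := by
    rw [map_mul, map_mul, mul_div_mul_left _ _ (algebraMap_ne_zero (by simpa using hj0)),
      num_div_denom]
  have hgW : algebraMap K[X] (RatFunc K) g ∈ W :=
    algebraMap_mem_of_coeff_mem (S := W.toSubring) hX hg_coeff
  refine ⟨f, g, fun i => ?_, hg_coeff, ⟨j, by simp [hgj], by simp [hgj]⟩, hfg⟩
  exact C_coeff_mem_of_div_mem (S := W.toSubring) hcoeff hg hgW (hfg ▸ hh) i

end RatFunc

theorem IsKFunctionRing.coeff_zero_div_mem {K : Type*} [Field K] {R S : Subring (RatFunc K)}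
    (hR : IsKFunctionRing R) (hRS : R ≤ S) {p : K[X]} (hp : p ≠ 0) :
    RatFunc.C (p.coeff 0) / algebraMap K[X] (RatFunc K) p ∈ S := by
  obtain ⟨r, hr, hpr⟩ := hR.2.2 p hp
  rw [RatFunc.algebraMap_eq_C] at hpr
  rw [hpr, mul_div_cancel_left₀ r (RatFunc.algebraMap_ne_zero hp)]
  exact hRS hr

/-- Every valuation overring `W` of a `K`-function ring `R` in `K(T)` is the trivial
extension of the valuation domain `W ∩ K` of `K`, i.e. `W = (W ∩ K)(T)`. -/
theorem valuation_overring_of_kFunctionRing {K : Type*} [Field K]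
    (R : Subring (RatFunc K)) (hR : IsKFunctionRing R)
    (W : ValuationSubring (RatFunc K)) (hW : (R : Set (RatFunc K)) ⊆ W) :
    (W : Set (RatFunc K)) = trivialExtSet (W.comap (algebraMap K (RatFunc K))) := by
  have hRW : R ≤ W.toSubring := fun _ hx => hW hx
  have hcoeff := RatFunc.coeff_div_mem_of_coeff_zero_div_mem (hW hR.2.1)
    (hR.coeff_zero_div_mem hRW)
  exact (RatFunc.subset_trivialExtSet_comap (hW hR.1) hcoeff).antisymm
    (RatFunc.trivialExtSet_comap_subset (hW hR.1) hcoeff)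
end

section
/- Let K be a field, T an indeterminate, and R a subring of K(T). Then R is a K-function ring if and only if R is integrally closed in K(T) and every valuation overring of R in K(T) equals V(T) for some valuation domain V of K. -/
open scoped Polynomial

/-!
In a `K`-function ring `R` every coefficient of a nonzero polynomial `f` lies in `f R`
(induction on the index of the coefficient, using `f = X · divX f + f(0)`). Hence, for
`x = p / q` and `m > deg p`, the coefficients of `q Xᵐ` are coefficients of `p + q Xᵐ`, so
`(x + Xᵐ)⁻¹ = q / (p + q Xᵐ) ∈ R`; an element integral over `R` whose inverse lies in `R` lies
in `R`, so `R` is integrally closed. For a valuation overring `W` and `V = W ∩ K`, the same fact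
gives `f⁻¹ ∈ W` whenever `f ∈ V[X]` has a unit coefficient, and normalising numerator and
denominator of `x ∈ W` by coefficients of maximal value shows `W = V(T)`. Conversely `X`, `X⁻¹`
and `f(0)/f` lie in every `V(T)`, hence in every valuation overring of `R`, hence in `R`,
because an integrally closed subring is the intersection of its valuation overrings.
-/

open Polynomial

theorem Subring.mem_of_isIntegral_of_inv_mem {F : Type*} [Field F] {R : Subring F} {y : F}
    (hy : IsIntegral R y) (hinv : y⁻¹ ∈ R) : y ∈ R := by
  obtain rfl | hy0 := eq_or_ne y 0
  · exact R.zero_mem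
  let := invertibleOfNonzero hy0
  obtain ⟨P, hmonic, hP⟩ := hy
  -- `0 = P.reverse (y⁻¹) = 1 + y⁻¹ · P.reverse.divX (y⁻¹)` writes `y` as a polynomial in `y⁻¹`
  set Q := P.reverse
  have hQ : eval₂ (algebraMap R F) y⁻¹ Q = 0 := by
    rw [← invOf_eq_inv, eval₂_reverse_eq_zero_iff]; exact hP
  have hQ0 : Q.coeff 0 = 1 := by rw [coeff_zero_reverse, hmonic.leadingCoeff]
  have hsplit := congrArg (eval₂ (algebraMap R F) y⁻¹) (divX_mul_X_add Q)
  rw [hQ, eval₂_add, eval₂_mul, eval₂_X, eval₂_C, hQ0, map_one] at hsplit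
  have hy : y = -eval₂ (algebraMap R F) y⁻¹ Q.divX := by
    linear_combination y * hsplit - eval₂ (algebraMap R F) y⁻¹ Q.divX * mul_inv_cancel₀ hy0
  rw [hy, show y⁻¹ = algebraMap R F ⟨y⁻¹, hinv⟩ from rfl, eval₂_at_apply]
  exact R.neg_mem (Subtype.prop _)

theorem ValuationSubring.exists_coeff_C_inv_mul_mem {K : Type*} [Field K]
    (V : ValuationSubring K) {f : K[X]} (hf : f ≠ 0) :
    ∃ i, f.coeff i ≠ 0 ∧ ∀ j, (C (f.coeff i)⁻¹ * f).coeff j ∈ V := by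
  obtain ⟨i, hi, hmax⟩ :=
    f.support.exists_max_image (V.valuation ∘ f.coeff) (nonempty_support_iff.mpr hf)
  have hi0 : f.coeff i ≠ 0 := mem_support_iff.mp hi
  refine ⟨i, hi0, fun j => ?_⟩
  rw [coeff_C_mul, inv_mul_eq_div]
  by_cases hj : j ∈ f.support
  · rw [← V.valuation_le_one_iff, map_div₀, div_le_one₀ (V.valuation.pos_iff.mpr hi0)]
    exact hmax j hj
  · rw [notMem_support_iff.mp hj, zero_div]
    exact V.zero_mem

section RatFunc

variable {K : Type*} [Field K]

theorem RatFunc.exists_algebraMap_eq_mul_of_coeff {S : Subring (RatFunc K)} (hX : RatFunc.X ∈ S)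
    (a : RatFunc K) {g : K[X]}
    (hg : ∀ j, ∃ r ∈ S, algebraMap K (RatFunc K) (g.coeff j) = a * r) :
    ∃ r ∈ S, algebraMap K[X] (RatFunc K) g = a * r := by
  choose r hr hgr using hg
  refine ⟨∑ j ∈ g.support, r j * RatFunc.X ^ j,
    S.sum_mem fun j _ => S.mul_mem (hr j) (S.pow_mem hX j), ?_⟩
  conv_lhs => rw [g.as_sum_support_C_mul_X_pow]
  simp only [map_sum, map_mul, map_pow, RatFunc.algebraMap_C, RatFunc.algebraMap_X,
    ← RatFunc.algebraMap_eq_C, hgr, Finset.mul_sum, mul_assoc]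

theorem RatFunc.algebraMap_mem_of_coeff_mem_s13 {S : Subring (RatFunc K)} (hX : RatFunc.X ∈ S)
    {g : K[X]} (hg : ∀ j, algebraMap K (RatFunc K) (g.coeff j) ∈ S) :
    algebraMap K[X] (RatFunc K) g ∈ S := by
  obtain ⟨r, hr, hgr⟩ :=
    RatFunc.exists_algebraMap_eq_mul_of_coeff hX 1 fun j => ⟨_, hg j, (one_mul _).symm⟩
  rwa [hgr, one_mul]

theorem div_mem_trivialExtSet {V : ValuationSubring K} {f g : K[X]} (hf : ∀ j, f.coeff j ∈ V)
    (hg : ∀ j, g.coeff j ∈ V) {i : ℕ} (hgi : g.coeff i = 1) :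
    algebraMap K[X] (RatFunc K) f / algebraMap K[X] (RatFunc K) g ∈ trivialExtSet V :=
  ⟨f, g, hf, hg, ⟨i, by simp [hgi], by simp [hgi]⟩, rfl⟩

end RatFunc

namespace IsKFunctionRing

variable {K : Type*} [Field K] {R : Subring (RatFunc K)}

theorem exists_coeff_eq_mul (hR : IsKFunctionRing R) {f : K[X]} (hf : f ≠ 0) (i : ℕ) :
    ∃ r ∈ R, algebraMap K (RatFunc K) (f.coeff i) = algebraMap K[X] (RatFunc K) f * r := by
  induction i generalizing f with
  | zero => exact hR.2.2 f hf
  | succ i ih =>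
    obtain hd | hd := eq_or_ne f.divX 0
    · exact ⟨0, R.zero_mem, by rw [← coeff_divX, hd, coeff_zero, map_zero, mul_zero]⟩
    obtain ⟨r₁, hr₁, he₁⟩ := ih hd
    obtain ⟨r₀, hr₀, he₀⟩ := hR.2.2 f hf
    have hdivX : algebraMap K[X] (RatFunc K) f.divX
        = algebraMap K[X] (RatFunc K) f * (1 - r₀) * RatFunc.X⁻¹ := by
      have hsplit := congrArg (algebraMap K[X] (RatFunc K)) (divX_mul_X_add f)
      rw [map_add, map_mul, RatFunc.algebraMap_X, RatFunc.algebraMap_C,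
        ← RatFunc.algebraMap_eq_C, he₀] at hsplit
      rw [eq_mul_inv_iff_mul_eq₀ RatFunc.X_ne_zero]
      linear_combination hsplit
    refine ⟨(1 - r₀) * RatFunc.X⁻¹ * r₁,
      R.mul_mem (R.mul_mem (R.sub_mem R.one_mem hr₀) hR.2.1) hr₁, ?_⟩
    rw [← coeff_divX, he₁, hdivX]
    ring

theorem exists_algebraMap_eq_mul_of_coeff (hR : IsKFunctionRing R) {f g : K[X]} (hf : f ≠ 0)
    (hg : ∀ j, g.coeff j = 0 ∨ g.coeff j = f.coeff j) :
    ∃ r ∈ R, algebraMap K[X] (RatFunc K) g = algebraMap K[X] (RatFunc K) f * r :=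
  RatFunc.exists_algebraMap_eq_mul_of_coeff hR.1 _ fun j => by
    obtain h | h := hg j
    · exact ⟨0, R.zero_mem, by rw [h, map_zero, mul_zero]⟩
    · rw [h]
      exact hR.exists_coeff_eq_mul hf j

theorem exists_inv_add_X_pow_mem (hR : IsKFunctionRing R) (x : RatFunc K) :
    ∃ m : ℕ, (x + RatFunc.X ^ m)⁻¹ ∈ R := by
  set m := x.num.natDegree + 1
  set h := x.num + x.denom * X ^ m
  have hcoeff : ∀ j, (x.denom * X ^ m).coeff j = 0 ∨ (x.denom * X ^ m).coeff j = h.coeff j := by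
    intro j
    by_cases hj : m ≤ j
    · right
      rw [coeff_add, coeff_eq_zero_of_natDegree_lt (p := x.num) (by omega), zero_add]
    · left
      rw [coeff_mul_X_pow', if_neg hj]
  have hh : h ≠ 0 := by
    intro h0
    have := congrArg (coeff · (x.denom.natDegree + m)) h0
    rw [coeff_add, coeff_mul_X_pow, coeff_eq_zero_of_natDegree_lt (p := x.num) (by omega), zero_add,
      coeff_zero, coeff_natDegree, leadingCoeff_eq_zero] at this
    exact x.denom_ne_zero this
  obtain ⟨r, hr, e⟩ := hR.exists_algebraMap_eq_mul_of_coeff hh hcoeff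
  have hx : x + RatFunc.X ^ m
      = algebraMap K[X] (RatFunc K) h / algebraMap K[X] (RatFunc K) x.denom := by
    have hxnd := x.num_div_denom
    rw [div_eq_iff (RatFunc.algebraMap_ne_zero x.denom_ne_zero)] at hxnd
    rw [eq_div_iff (RatFunc.algebraMap_ne_zero x.denom_ne_zero)]
    simp only [h, map_add, map_mul, map_pow, RatFunc.algebraMap_X]
    linear_combination -hxnd
  refine ⟨m, ?_⟩
  have : (x + RatFunc.X ^ m)⁻¹ = r / RatFunc.X ^ m := by
    rw [map_mul, map_pow, RatFunc.algebraMap_X] at e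
    rw [hx, inv_div, div_eq_div_iff (RatFunc.algebraMap_ne_zero hh)
      (pow_ne_zero _ RatFunc.X_ne_zero)]
    linear_combination e
  rw [this, div_eq_mul_inv, ← inv_pow]
  exact R.mul_mem hr (R.pow_mem hR.2.1 m)

theorem isIntegrallyClosedIn (hR : IsKFunctionRing R) : IsIntegrallyClosedIn R (RatFunc K) := by
  refine Subring.isIntegrallyClosedIn_iff.mpr fun x hx => ?_
  obtain ⟨m, hm⟩ := hR.exists_inv_add_X_pow_mem x
  have hXm : RatFunc.X ^ m ∈ R := R.pow_mem hR.1 m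
  have hint : IsIntegral R (x + RatFunc.X ^ m) :=
    hx.add (isIntegral_algebraMap (x := (⟨_, hXm⟩ : R)))
  simpa using R.sub_mem (Subring.mem_of_isIntegral_of_inv_mem hint hm) hXm

theorem inv_mem_of_coeff_inv_mem (hR : IsKFunctionRing R) {S : Subring (RatFunc K)} (hRS : R ≤ S)
    {f : K[X]} {i : ℕ} (hi : f.coeff i ≠ 0)
    (hinv : (algebraMap K (RatFunc K) (f.coeff i))⁻¹ ∈ S) :
    (algebraMap K[X] (RatFunc K) f)⁻¹ ∈ S := by
  obtain ⟨r, hr, e⟩ := hR.exists_coeff_eq_mul (f := f) (by rintro rfl; exact hi (coeff_zero i)) i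
  have hr0 : r ≠ 0 := by
    rintro rfl
    rw [mul_zero, map_eq_zero_iff _ (algebraMap K (RatFunc K)).injective] at e
    exact hi e
  have : (algebraMap K[X] (RatFunc K) f)⁻¹ = (algebraMap K (RatFunc K) (f.coeff i))⁻¹ * r := by
    rw [e, mul_inv, mul_assoc, inv_mul_cancel₀ hr0, mul_one]
  rw [this]
  exact S.mul_mem hinv (hRS hr)

theorem trivialExtSet_subset (hR : IsKFunctionRing R) {S : Subring (RatFunc K)} (hRS : R ≤ S)
    {V : ValuationSubring K} (hV : ∀ a ∈ V, algebraMap K (RatFunc K) a ∈ S) :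
    trivialExtSet V ⊆ S := by
  rintro _ ⟨f, g, hf, hg, ⟨i, hi, hiV⟩, rfl⟩
  rw [div_eq_mul_inv]
  refine S.mul_mem (RatFunc.algebraMap_mem_of_coeff_mem_s13 (hRS hR.1) fun j => hV _ (hf j)) ?_
  exact hR.inv_mem_of_coeff_inv_mem hRS hi (by rw [← map_inv₀]; exact hV _ hiV)

theorem subset_trivialExtSet (hR : IsKFunctionRing R) (W : ValuationSubring (RatFunc K))
    (hRW : R ≤ W.toSubring) :
    (W : Set (RatFunc K)) ⊆ trivialExtSet (W.comap (algebraMap K (RatFunc K))) := by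
  set V := W.comap (algebraMap K (RatFunc K))
  intro x hx
  obtain rfl | hx0 := eq_or_ne x 0
  · simpa using div_mem_trivialExtSet (V := V) (f := 0) (g := 1) (by simp)
      (by simp [coeff_one, apply_ite (· ∈ V)]) coeff_one_zero
  obtain ⟨i, hi, hp₁⟩ := V.exists_coeff_C_inv_mul_mem (RatFunc.num_ne_zero hx0)
  obtain ⟨k, hk, hq₁⟩ := V.exists_coeff_C_inv_mul_mem x.denom_ne_zero
  set p₁ := C (x.num.coeff i)⁻¹ * x.num
  set q₁ := C (x.denom.coeff k)⁻¹ * x.denom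
  set c := x.num.coeff i / x.denom.coeff k
  have hp₁i : p₁.coeff i = 1 := by simp [p₁, hi]
  have hq₁k : q₁.coeff k = 1 := by simp [q₁, hk]
  have hP := RatFunc.algebraMap_ne_zero (x := p₁) fun h => by
    rw [h, coeff_zero] at hp₁i; exact zero_ne_one hp₁i
  have hQ := RatFunc.algebraMap_ne_zero (x := q₁) fun h => by
    rw [h, coeff_zero] at hq₁k; exact zero_ne_one hq₁k
  have hx' : x = algebraMap K[X] (RatFunc K) (C c * p₁) / algebraMap K[X] (RatFunc K) q₁ := by
    have ha : algebraMap K (RatFunc K) (x.num.coeff i) ≠ 0 := (_root_.map_ne_zero _).mpr hi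
    have hb : algebraMap K (RatFunc K) (x.denom.coeff k) ≠ 0 := (_root_.map_ne_zero _).mpr hk
    conv_lhs => rw [← x.num_div_denom]
    simp only [c, p₁, q₁, map_mul, RatFunc.algebraMap_C, ← RatFunc.algebraMap_eq_C, map_div₀,
      map_inv₀]
    field_simp
  have hcV : c ∈ V := by
    have : algebraMap K (RatFunc K) c
        = x * algebraMap K[X] (RatFunc K) q₁ * (algebraMap K[X] (RatFunc K) p₁)⁻¹ := by
      rw [hx', map_mul, RatFunc.algebraMap_C, ← RatFunc.algebraMap_eq_C]
      field_simp
    rw [ValuationSubring.mem_comap, this]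
    refine W.mul_mem _ _ (W.mul_mem _ _ hx ?_) ?_
    · exact RatFunc.algebraMap_mem_of_coeff_mem_s13 (hRW hR.1) hq₁
    · exact hR.inv_mem_of_coeff_inv_mem hRW (i := i) (by simp [hp₁i]) (by simp [hp₁i])
  rw [hx']
  refine div_mem_trivialExtSet (fun j => ?_) hq₁ hq₁k
  rw [coeff_C_mul]
  exact V.mul_mem _ _ hcV (hp₁ j)

theorem coe_eq_trivialExtSet (hR : IsKFunctionRing R) (W : ValuationSubring (RatFunc K))
    (hRW : R ≤ W.toSubring) :
    (W : Set (RatFunc K)) = trivialExtSet (W.comap (algebraMap K (RatFunc K))) :=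
  (hR.subset_trivialExtSet W hRW).antisymm (hR.trivialExtSet_subset hRW fun _ ha => ha)

end IsKFunctionRing

section Converse

variable {K : Type*} [Field K]

theorem X_mem_trivialExtSet (V : ValuationSubring K) : RatFunc.X ∈ trivialExtSet V := by
  simpa using div_mem_trivialExtSet (V := V) (f := X) (g := 1)
    (by simp [coeff_X, apply_ite (· ∈ V)]) (by simp [coeff_one, apply_ite (· ∈ V)])
    coeff_one_zero

theorem X_inv_mem_trivialExtSet (V : ValuationSubring K) : RatFunc.X⁻¹ ∈ trivialExtSet V := by
  simpa using div_mem_trivialExtSet (V := V) (f := 1) (g := X)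
    (by simp [coeff_one, apply_ite (· ∈ V)]) (by simp [coeff_X, apply_ite (· ∈ V)])
    coeff_X_one

theorem inv_mul_coeff_zero_mem_trivialExtSet (V : ValuationSubring K) {f : K[X]} (hf : f ≠ 0) :
    (algebraMap K[X] (RatFunc K) f)⁻¹ * algebraMap K (RatFunc K) (f.coeff 0)
      ∈ trivialExtSet V := by
  obtain ⟨i, hi, hg⟩ := V.exists_coeff_C_inv_mul_mem hf
  set g := C (f.coeff i)⁻¹ * f
  have hfg : (algebraMap K[X] (RatFunc K) f)⁻¹ * algebraMap K (RatFunc K) (f.coeff 0)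
      = algebraMap K[X] (RatFunc K) (C (g.coeff 0)) / algebraMap K[X] (RatFunc K) g := by
    have : algebraMap K (RatFunc K) (f.coeff i) ≠ 0 := (_root_.map_ne_zero _).mpr hi
    simp only [g, coeff_C_mul, map_mul, RatFunc.algebraMap_C, ← RatFunc.algebraMap_eq_C,
      map_inv₀]
    field_simp
  rw [hfg]
  exact div_mem_trivialExtSet (by simp [coeff_C, apply_ite (· ∈ V), hg 0]) hg (i := i)
    (by simp [g, hi])

theorem isKFunctionRing_of_forall_mem_trivialExtSet {R : Subring (RatFunc K)}
    (h : ∀ x, (∀ V : ValuationSubring K, x ∈ trivialExtSet V) → x ∈ R) : IsKFunctionRing R :=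
  ⟨h _ X_mem_trivialExtSet, h _ X_inv_mem_trivialExtSet, fun _ hf =>
    ⟨_, h _ fun V => inv_mul_coeff_zero_mem_trivialExtSet V hf,
      (mul_inv_cancel_left₀ (RatFunc.algebraMap_ne_zero hf) _).symm⟩⟩

end Converse

/-- A subring `R` of `K(T)` is a `K`-function ring if and only if `R` is integrally closed
in `K(T)` and every valuation overring of `R` in `K(T)` is the trivial extension `V(T)`
of some valuation domain `V` of `K`. -/
theorem isKFunctionRing_iff {K : Type*} [Field K] (R : Subring (RatFunc K)) :
    IsKFunctionRing R ↔
      ((∀ x : RatFunc K, R.subtype.IsIntegralElem x → x ∈ R) ∧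
        ∀ W : ValuationSubring (RatFunc K), (R : Set (RatFunc K)) ⊆ W →
          ∃ V : ValuationSubring K, (W : Set (RatFunc K)) = trivialExtSet V) := by
  refine ⟨fun hR => ⟨Subring.isIntegrallyClosedIn_iff.mp hR.isIntegrallyClosedIn,
    fun W hRW => ⟨_, hR.coe_eq_trivialExtSet W hRW⟩⟩, fun ⟨hIC, hW⟩ => ?_⟩
  have : IsIntegrallyClosedIn R (RatFunc K) := Subring.isIntegrallyClosedIn_iff.mpr hIC
  refine isKFunctionRing_of_forall_mem_trivialExtSet fun x hx => by_contra fun hxR => ?_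
  obtain ⟨W, hRW, hxW⟩ := R.exists_le_valuationSubring_of_isIntegrallyClosedIn hxR
  obtain ⟨V, hV⟩ := hW W hRW
  exact hxW (by rw [← SetLike.mem_coe, hV]; exact hx V)
end

section
/- Let K be a field, A a subring of K, Y a nonempty subset of Zar(K|A), and 𝒰 an ultrafilter on Y. Then A_{Y,𝒰} := {x ∈ K | {V ∈ Y | x ∈ V} ∈ 𝒰} is a valuation domain of K containing A. -/
namespace Subring

variable {R ι : Type*} [Ring R]

def eventually (l : Filter ι) (S : ι → Subring R) : Subring R where
  carrier := {x | ∀ᶠ i in l, x ∈ S i}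
  one_mem' := .of_forall fun i => (S i).one_mem
  zero_mem' := .of_forall fun i => (S i).zero_mem
  add_mem' hx hy := (hx.and hy).mono fun i h => (S i).add_mem h.1 h.2
  mul_mem' hx hy := (hx.and hy).mono fun i h => (S i).mul_mem h.1 h.2
  neg_mem' hx := hx.mono fun i h => (S i).neg_mem h

end Subring

namespace ValuationSubring

variable {K ι : Type*} [Field K]

def ultrafilterLimit (𝒰 : Ultrafilter ι) (V : ι → ValuationSubring K) : ValuationSubring K where
  toSubring := Subring.eventually (𝒰 : Filter ι) fun i => (V i).toSubring
  -- each `V i` contains `x` or `x⁻¹`, and an ultrafilter contains one of the two index sets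
  mem_or_inv_mem' x :=
    Ultrafilter.eventually_or.mp (.of_forall fun i => (V i).mem_or_inv_mem x)

end ValuationSubring

theorem ultrafilter_limit_valuation_general {K : Type*} [Field K] (A : Subring K)
    (Y : Set (ValuationSubring K)) (hY : ∀ V ∈ Y, (A : Set K) ⊆ ↑V)
    (𝒰 : Ultrafilter Y) :
    ∃ V : ValuationSubring K,
      (V : Set K) = {x : K | {v : Y | x ∈ (v : ValuationSubring K)} ∈ 𝒰} ∧
      (A : Set K) ⊆ ↑V :=
  ⟨ValuationSubring.ultrafilterLimit 𝒰 Subtype.val, rfl,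
    fun _ ha => .of_forall fun v => hY v v.2 ha⟩

/-- Let `K` be a field, `A` a subring of `K`, `Y` a nonempty subset of `Zar(K|A)` and
`𝒰` an ultrafilter on `Y`. Then `A_{Y,𝒰} := {x ∈ K | B_x ∩ Y ∈ 𝒰}` is a valuation
domain of `K` containing `A`. -/
theorem ultrafilter_limit_valuation {K : Type*} [Field K] (A : Subring K)
    (Y : Set (ValuationSubring K)) (hY : ∀ V ∈ Y, (A : Set K) ⊆ ↑V)
    (hne : Y.Nonempty) (𝒰 : Ultrafilter Y) :
    ∃ V : ValuationSubring K,
      (V : Set K) = {x : K | {v : Y | x ∈ (v : ValuationSubring K)} ∈ 𝒰} ∧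
      (A : Set K) ⊆ ↑V :=
  ultrafilter_limit_valuation_general A Y hY 𝒰
end
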